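/- arXiv:2204.09242 — 8 statements merged into one kernel-verified Lean document; each statement's English description precedes it below -/
import Mathlib

section
/- Let G be a group whose center Z(G) is infinite, and let H be an infinite subgroup of G of finite height. Then H has finite index in G. -/
open Pointwise

/-- A subgroup `H` of `G` has height at most `n`: for any `n+1` pairwise distinct left
cosets `g₀H, …, gₙH`, the intersection `g₀Hg₀⁻¹ ∩ … ∩ gₙHgₙ⁻¹` is finite. -/
def HeightLE {G : Type*} [Group G] (H : Subgroup G) (n : ℕ) : Prop :=
  ∀ g : Fin (n + 1) → G,
    (∀ i j, i ≠ j → g i • (H : Set G) ≠ g j • (H : Set G)) →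
    (⋂ i, (fun x => g i * x * (g i)⁻¹) '' (H : Set G)).Finite

/-- `H` has finite height in `G` if it has height at most `n` for some `n`. -/
def HasFiniteHeight {G : Type*} [Group G] (H : Subgroup G) : Prop :=
  ∃ n : ℕ, HeightLE H n

/-- Let `G` be a group whose center is infinite, and let `H` be an infinite subgroup of `G`
of finite height. Then `H` has finite index in `G`. -/
theorem infinite_center_finiteHeight_implies_finiteIndex
    {G : Type*} [Group G] (H : Subgroup G)
    (hZ : ((Subgroup.center G : Subgroup G) : Set G).Infinite)
    (hHinf : (H : Set G).Infinite)
    (hheight : HasFiniteHeight H) :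
    H.index ≠ 0 := by
  obtain ⟨n, hn⟩ := hheight
  -- conjugation by a central element fixes H as a set
  have hconj : ∀ z : G, z ∈ Subgroup.center G →
      (fun x => z * x * z⁻¹) '' (H : Set G) = (H : Set G) := by
    intro z hz
    have : ∀ x : G, z * x * z⁻¹ = x := by
      intro x
      rw [(Subgroup.mem_center_iff.mp hz x).symm]
      group
    calc (fun x => z * x * z⁻¹) '' (H : Set G)
        = (fun x => x) '' (H : Set G) := Set.image_congr' this
      _ = (H : Set G) := Set.image_id' _
  -- key step 1: the center meets only finitely many cosets of H
  have hfin : ((QuotientGroup.mk : G → G ⧸ H) '' (Subgroup.center G : Set G)).Finite := by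
    by_contra hinf
    have hinf' : ((QuotientGroup.mk : G → G ⧸ H) '' (Subgroup.center G : Set G)).Infinite := hinf
    have := hinf'.to_subtype
    obtain ⟨f⟩ : Nonempty (Fin (n + 1) ↪ ((QuotientGroup.mk : G → G ⧸ H) ''
        (Subgroup.center G : Set G))) :=
      ⟨(Fin.valEmbedding.trans (Infinite.natEmbedding _))⟩
    choose z hzc hzq using fun i => (f i).2
    have hdist : ∀ i j, i ≠ j → z i • (H : Set G) ≠ z j • (H : Set G) := by
      intro i j hij hEq
      apply hij
      have : (QuotientGroup.mk (z i) : G ⧸ H) = QuotientGroup.mk (z j) :=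
        (QuotientGroup.eq).mpr ((leftCoset_eq_iff H).mp hEq)
      have : (f i : G ⧸ H) = (f j : G ⧸ H) := by rw [← hzq i, ← hzq j, this]
      exact f.injective (Subtype.ext this)
    have hfinH := hn z hdist
    apply hHinf
    have : (⋂ i, (fun x => z i * x * (z i)⁻¹) '' (H : Set G)) = (H : Set G) := by
      have h0 : ∀ i : Fin (n + 1), (fun x => z i * x * (z i)⁻¹) '' (H : Set G) = (H : Set G) :=
        fun i => hconj (z i) (hzc i)
      simp [h0, Set.iInter_const]
    rwa [this] at hfinH
  -- key step 2: H ∩ Z(G) is infinite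
  have hK : ((H ⊓ Subgroup.center G : Subgroup G) : Set G).Infinite := by
    have hZt := hZ.to_subtype
    have hfint := hfin.to_subtype
    set q : G → G ⧸ H := QuotientGroup.mk with hq
    let f : ↥(Subgroup.center G : Set G) → ↥(q '' (Subgroup.center G : Set G)) :=
      fun x => ⟨q x, ⟨x, x.2, rfl⟩⟩
    obtain ⟨y, hy⟩ := Finite.exists_infinite_fiber f
    rw [Set.infinite_coe_iff] at hy
    obtain ⟨⟨z₀, hz₀⟩, hz₀y⟩ := hy.nonempty
    have : Set.MapsTo (fun x : ↥(Subgroup.center G : Set G) => z₀⁻¹ * (x : G))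
        (f ⁻¹' {y}) ((H ⊓ Subgroup.center G : Subgroup G) : Set G) := by
      intro x hx
      have hqq : q x = q z₀ := by
        have h1 : f x = y := hx
        have h2 : f ⟨z₀, hz₀⟩ = y := hz₀y
        have := h1.trans h2.symm
        exact Subtype.ext_iff.mp this
      have hmem : z₀⁻¹ * (x : G) ∈ H := by
        have := (QuotientGroup.eq).mp hqq.symm
        exact this
      exact ⟨hmem, Subgroup.mul_mem _ (Subgroup.inv_mem _ hz₀) x.2⟩
    have hinj : Set.InjOn (fun x : ↥(Subgroup.center G : Set G) => z₀⁻¹ * (x : G))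
        (f ⁻¹' {y}) := by
      intro a _ b _ hab
      exact Subtype.ext (mul_left_cancel hab)
    have := (hy.image hinj).mono (Set.image_subset_iff.mpr this)
    exact this
  -- conclusion : at most n distinct cosets
  intro hidx
  rw [Subgroup.index, Nat.card_eq_zero] at hidx
  rcases hidx with h | h
  · exact h.false (QuotientGroup.mk 1)
  · obtain ⟨f⟩ : Nonempty (Fin (n + 1) ↪ G ⧸ H) :=
      ⟨(Fin.valEmbedding.trans (Infinite.natEmbedding _))⟩
    set g : Fin (n + 1) → G := fun i => (f i).out with hg
    have hdist : ∀ i j, i ≠ j → g i • (H : Set G) ≠ g j • (H : Set G) := by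
      intro i j hij hEq
      apply hij
      apply f.injective
      have : (QuotientGroup.mk (g i) : G ⧸ H) = QuotientGroup.mk (g j) :=
        (QuotientGroup.eq).mpr ((leftCoset_eq_iff H).mp hEq)
      rwa [hg, QuotientGroup.out_eq', QuotientGroup.out_eq'] at this
    have hfinI := hn g hdist
    apply hK
    apply Set.Finite.subset hfinI
    intro k hk
    rw [Set.mem_iInter]
    intro i
    refine ⟨k, hk.1, ?_⟩
    show g i * k * (g i)⁻¹ = k
    rw [Subgroup.mem_center_iff.mp hk.2 (g i)]
    group
end

section
/- Let G be a group whose center Z(G) is infinite, and let H be an infinite subgroup of G of finite height. Then Z(G) ∩ H has finite index in Z(G). -/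
open Pointwise

/-- Let `G` be a group whose center `Z(G)` is infinite, and let `H` be an infinite subgroup
of `G` of finite height. Then `Z(G) ∩ H` has finite index in `Z(G)`. -/
theorem infinite_center_finiteHeight_implies_center_inter_finiteIndex
    {G : Type*} [Group G] (H : Subgroup G)
    (hZ : ((Subgroup.center G : Subgroup G) : Set G).Infinite)
    (hHinf : (H : Set G).Infinite)
    (hheight : HasFiniteHeight H) :
    H.relIndex (Subgroup.center G) ≠ 0 := by
  obtain ⟨n, hn⟩ := hheight
  intro h0
  rw [Subgroup.relIndex, Subgroup.index] at h0
  have hinf : Infinite (Subgroup.center G ⧸ H.subgroupOf (Subgroup.center G)) :=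
    (Nat.card_eq_zero.mp h0).resolve_left (fun h => h.false (Quotient.mk'' 1))
  let e : Fin (n + 1) ↪ (Subgroup.center G ⧸ H.subgroupOf (Subgroup.center G)) :=
    Fin.valEmbedding.trans (Infinite.natEmbedding _)
  set g : Fin (n + 1) → G := fun i => ((e i).out : G) with hg
  have hdist : ∀ i j, i ≠ j → g i • (H : Set G) ≠ g j • (H : Set G) := by
    intro i j hij heq
    apply hij
    apply e.injective
    have hmem : (g i)⁻¹ * g j ∈ H := (leftCoset_eq_iff H).mp heq
    have : ((e i).out)⁻¹ * (e j).out ∈ H.subgroupOf (Subgroup.center G) := by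
      rw [Subgroup.mem_subgroupOf]
      exact hmem
    calc e i = QuotientGroup.mk (e i).out := ((e i).out_eq).symm
      _ = QuotientGroup.mk (e j).out := (QuotientGroup.eq).mpr this
      _ = e j := (e j).out_eq
  have hfix : ∀ i, (fun x => g i * x * (g i)⁻¹) '' (H : Set G) = H := by
    intro i
    have hc : ∀ x : G, g i * x * (g i)⁻¹ = x := by
      intro x
      have := ((e i).out.2)
      rw [Subgroup.mem_center_iff] at this
      rw [← this x, mul_assoc, mul_inv_cancel, mul_one]
    have : (fun x => g i * x * (g i)⁻¹) = id := funext hc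
    rw [this, Set.image_id]
  have : (⋂ i, (fun x => g i * x * (g i)⁻¹) '' (H : Set G)) = H := by
    simp [hfix, Set.iInter_const]
  have hfin := hn g hdist
  rw [this] at hfin
  exact hHinf hfin
end

section
/- Let G be a group and H a subgroup of G of finite height such that Z(G) ∩ H is infinite. Then H has finite index in G. -/
open Pointwise

/-
Proof idea: a central element `z` of `H` satisfies `g z g⁻¹ = z ∈ gHg⁻¹` for every `g`, so the
infinite group `Z(G) ∩ H` lies in the intersection of all conjugates of `H`. If `H` had infinite
index, any number of distinct cosets would be available, and height `≤ n` would force that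
intersection over `n + 1` of them to be finite.
-/

namespace Subgroup

variable {G : Type*} [Group G] (H : Subgroup G)

theorem smul_coe_eq_smul_coe_iff {a b : G} :
    a • (H : Set G) = b • (H : Set G) ↔ (a : G ⧸ H) = b := by
  rw [leftCoset_eq_iff, QuotientGroup.eq]

theorem coe_center_inf_subset_iInter_conj {ι : Type*} (g : ι → G) :
    ((center G ⊓ H : Subgroup G) : Set G) ⊆ ⋂ i, (fun x => g i * x * (g i)⁻¹) '' (H : Set G) := by
  rintro z ⟨hz_center, hz_H⟩
  refine Set.mem_iInter.2 fun i => ⟨z, hz_H, ?_⟩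
  simp only [mem_center_iff.mp hz_center (g i), mul_inv_cancel_right]

theorem exists_pairwise_smul_ne_of_index_eq_zero (hidx : H.index = 0) (n : ℕ) :
    ∃ g : Fin n → G, ∀ i j, i ≠ j → g i • (H : Set G) ≠ g j • (H : Set G) := by
  have : Infinite (G ⧸ H) := index_eq_zero_iff_infinite.mp hidx
  let f : Fin n ↪ G ⧸ H := Fin.valEmbedding.trans (Infinite.natEmbedding _)
  refine ⟨fun i => (f i).out, fun i j hij hcoset => hij (f.injective ?_)⟩
  simpa using (smul_coe_eq_smul_coe_iff H).mp hcoset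

end Subgroup

theorem HeightLE.finite_center_inf_of_index_eq_zero {G : Type*} [Group G] {H : Subgroup G}
    {n : ℕ} (hn : HeightLE H n) (hidx : H.index = 0) :
    ((Subgroup.center G ⊓ H : Subgroup G) : Set G).Finite := by
  obtain ⟨g, hg⟩ := H.exists_pairwise_smul_ne_of_index_eq_zero hidx (n + 1)
  exact (hn g hg).subset (H.coe_center_inf_subset_iInter_conj g)

/-- Let `G` be a group and `H` a subgroup of finite height such that `Z(G) ∩ H` is infinite.
Then `H` has finite index in `G`. -/
theorem finiteHeight_infinite_center_inter_implies_finiteIndex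
    {G : Type*} [Group G] (H : Subgroup G)
    (hheight : HasFiniteHeight H)
    (hinf : ((Subgroup.center G ⊓ H : Subgroup G) : Set G).Infinite) :
    H.index ≠ 0 := by
  obtain ⟨n, hn⟩ := hheight
  exact fun hidx => hinf (hn.finite_center_inf_of_index_eq_zero hidx)
end

section
/- Let G be a group and let H be a subgroup of G which has finite height and infinite index in G. Let 𝒜 be a nonempty collection of infinite subgroups of G such that: (i) 𝒜 is closed under conjugation by elements of G; (ii) for every A ∈ 𝒜, every subgroup of A which has finite height in A is either finite or of finite index in A; (iii) for any A, A' ∈ 𝒜 there is a finite chain A = A_0, A_1, …, A_m = A' of members of 𝒜 with A_i ∩ A_{i+1} infinite for every 0 ≤ i ≤ m−1. Then H ∩ A is finite for every A ∈ 𝒜. -/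
open Pointwise

/-!
If `H ∩ A` is infinite for one `A ∈ 𝒜`, then `H ∩ A` has finite height in `A`, hence finite index
in `A`. Finite relative index passes to the infinite intersections along a chain, so `H` has finite
index relative to every member of `𝒜`, in particular to every conjugate of `A`. Then every
conjugate of `H` has finite index relative to `A`, and so does the intersection of finitely many of
them, which is therefore infinite. Taking `n + 1` distinct cosets of `H` (possible since its index
is infinite) contradicts height at most `n`.
-/

namespace Subgroup

variable {G : Type*} [Group G]

lemma coe_inf_infinite_iff (H K : Subgroup G) :
    ((H ⊓ K : Subgroup G) : Set G).Infinite ↔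
      ((H.subgroupOf K : Subgroup K) : Set K).Infinite := by
  rw [← subgroupOf_map_subtype, coe_map, coe_subtype,
    Set.infinite_image_iff Subtype.val_injective.injOn]

lemma inf_infinite_of_relIndex_ne_zero {H K : Subgroup G} (hK : (K : Set G).Infinite)
    (hHK : H.relIndex K ≠ 0) : ((H ⊓ K : Subgroup G) : Set G).Infinite := by
  have : Infinite K := hK.to_subtype
  have hcard := (H.subgroupOf K).card_mul_index
  rw [Nat.card_eq_zero_of_infinite (α := K), mul_eq_zero, ← relIndex] at hcard
  obtain hempty | hinf := Nat.card_eq_zero.mp (hcard.resolve_right hHK)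
  · exact hempty.elim 1
  · exact (coe_inf_infinite_iff H K).mpr (Set.infinite_coe_iff.mp hinf)

lemma inf_infinite_of_relIndex_ne_zero_of_inf_infinite {H A B : Subgroup G}
    (hHA : H.relIndex A ≠ 0) (hAB : ((A ⊓ B : Subgroup G) : Set G).Infinite) :
    ((H ⊓ B : Subgroup G) : Set G).Infinite :=
  (inf_infinite_of_relIndex_ne_zero hAB
    (fun h => hHA (relIndex_eq_zero_of_le_right inf_le_left h))).mono
    (le_inf inf_le_left (inf_le_right.trans inf_le_right))

lemma relIndex_map_conj (H A : Subgroup G) (g : G) :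
    (H.map (MulAut.conj g).toMonoidHom).relIndex A =
      H.relIndex (A.map (MulAut.conj g⁻¹).toMonoidHom) := by
  rw [map_equiv_eq_comap_symm', relIndex_comap, map_inv, MulAut.inv_def]

lemma coe_iInf_map_conj {ι : Type*} (H : Subgroup G) (g : ι → G) :
    ((⨅ i, H.map (MulAut.conj (g i)).toMonoidHom : Subgroup G) : Set G) =
      ⋂ i, (fun x => g i * x * (g i)⁻¹) '' (H : Set G) := by
  simp only [coe_iInf, coe_map]
  rfl

lemma exists_distinct_leftCosets {H : Subgroup G} (hH : H.index = 0) (n : ℕ) :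
    ∃ g : Fin n → G, ∀ i j, i ≠ j → g i • (H : Set G) ≠ g j • (H : Set G) := by
  have : Infinite (G ⧸ H) := index_eq_zero_iff_infinite.mp hH
  let e : Fin n ↪ G ⧸ H := Fin.valEmbedding.trans (Infinite.natEmbedding _)
  refine ⟨fun i => (e i).out, fun i j hij hcoset => hij (e.injective ?_)⟩
  rw [← QuotientGroup.out_eq' (e i), ← QuotientGroup.out_eq' (e j)]
  exact QuotientGroup.eq.mpr ((leftCoset_eq_iff H).mp hcoset)

end Subgroup

section Height

variable {G : Type*} [Group G]

lemma HeightLE.subgroupOf {H : Subgroup G} {n : ℕ} (hH : HeightLE H n) (A : Subgroup G) :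
    HeightLE (H.subgroupOf A) n := by
  intro g hg
  have hg' : ∀ i j, i ≠ j → (g i : G) • (H : Set G) ≠ (g j : G) • (H : Set G) := by
    intro i j hij hcoset
    apply hg i j hij
    rw [leftCoset_eq_iff] at hcoset ⊢
    simpa [Subgroup.mem_subgroupOf] using hcoset
  refine ((hH (fun i => g i) hg').preimage Subtype.val_injective.injOn).subset ?_
  intro x hx
  simp only [Set.mem_iInter, Set.mem_image, Set.mem_preimage] at hx ⊢
  intro i
  obtain ⟨k, hk, rfl⟩ := hx i
  exact ⟨k, Subgroup.mem_subgroupOf.mp hk, rfl⟩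

lemma HasFiniteHeight.subgroupOf {H : Subgroup G} (hH : HasFiniteHeight H) (A : Subgroup G) :
    HasFiniteHeight (H.subgroupOf A) :=
  hH.imp fun _ hn => hn.subgroupOf A

lemma HasFiniteHeight.relIndex_ne_zero_of_inf_infinite {H A : Subgroup G}
    (hH : HasFiniteHeight H)
    (hA : ∀ K : Subgroup A, HasFiniteHeight K → (K : Set A).Finite ∨ K.index ≠ 0)
    (hHA : ((H ⊓ A : Subgroup G) : Set G).Infinite) : H.relIndex A ≠ 0 :=
  (hA _ (hH.subgroupOf A)).resolve_left ((Subgroup.coe_inf_infinite_iff H A).mp hHA)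

lemma not_heightLE_of_relIndex_map_conj_ne_zero {H A : Subgroup G} (hH : H.index = 0)
    (hA : (A : Set G).Infinite)
    (hconj : ∀ g : G, (H.map (MulAut.conj g).toMonoidHom).relIndex A ≠ 0) (n : ℕ) :
    ¬ HeightLE H n := by
  intro hn
  obtain ⟨g, hg⟩ := Subgroup.exists_distinct_leftCosets hH (n + 1)
  refine Set.not_infinite.mpr (hn g hg) ?_
  rw [← Subgroup.coe_iInf_map_conj]
  exact (Subgroup.inf_infinite_of_relIndex_ne_zero hA
    (Subgroup.relIndex_iInf_ne_zero fun i => hconj (g i))).mono inf_le_left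

end Height

theorem inter_finite_of_finiteHeight_infiniteIndex_general
    {G : Type*} [Group G] (H : Subgroup G)
    (hH : HasFiniteHeight H) (hHindex : H.index = 0)
    (𝒜 : Set (Subgroup G))
    (hinf : ∀ A ∈ 𝒜, (A : Set G).Infinite)
    (hconj : ∀ A ∈ 𝒜, ∀ g : G, A.map (MulAut.conj g).toMonoidHom ∈ 𝒜)
    (hfh : ∀ A ∈ 𝒜, ∀ K : Subgroup A, HasFiniteHeight K → (K : Set A).Finite ∨ K.index ≠ 0)
    (hchain : ∀ A ∈ 𝒜, ∀ A' ∈ 𝒜, ∃ m : ℕ, ∃ c : Fin (m + 1) → Subgroup G,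
      c 0 = A ∧ c (Fin.last m) = A' ∧ (∀ i, c i ∈ 𝒜) ∧
      ∀ i : Fin m, ((c i.castSucc ⊓ c i.succ : Subgroup G) : Set G).Infinite) :
    ∀ A ∈ 𝒜, ((H ⊓ A : Subgroup G) : Set G).Finite := by
  intro A hA
  by_contra hHA
  have hrel : ∀ B ∈ 𝒜, H.relIndex B ≠ 0 := by
    intro B hB
    obtain ⟨m, c, rfl, rfl, hc𝒜, hcinf⟩ := hchain A hA B hB
    have hinf_chain : ∀ i, ((H ⊓ c i : Subgroup G) : Set G).Infinite :=
      Fin.induction hHA fun i ih => Subgroup.inf_infinite_of_relIndex_ne_zero_of_inf_infinite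
        (hH.relIndex_ne_zero_of_inf_infinite (hfh _ (hc𝒜 _)) ih) (hcinf i)
    exact hH.relIndex_ne_zero_of_inf_infinite (hfh _ (hc𝒜 _)) (hinf_chain _)
  obtain ⟨n, hn⟩ := hH
  refine not_heightLE_of_relIndex_map_conj_ne_zero hHindex (hinf A hA) (fun g => ?_) n hn
  rw [Subgroup.relIndex_map_conj]
  exact hrel _ (hconj A hA g⁻¹)

/-- Let `H ≤ G` have finite height and infinite index, and let `𝒜` be a nonempty collection of
infinite subgroups of `G` which is closed under conjugation, such that each finite-height
subgroup of a member of `𝒜` is finite or of finite index, and such that any two members of `𝒜`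
are connected by a chain of members with consecutive infinite intersections.
Then `H ∩ A` is finite for every `A ∈ 𝒜`. -/
theorem inter_finite_of_finiteHeight_infiniteIndex
    {G : Type*} [Group G] (H : Subgroup G)
    (hH : HasFiniteHeight H) (hHindex : H.index = 0)
    (𝒜 : Set (Subgroup G)) (hne : 𝒜.Nonempty)
    (hinf : ∀ A ∈ 𝒜, (A : Set G).Infinite)
    (hconj : ∀ A ∈ 𝒜, ∀ g : G, A.map (MulAut.conj g).toMonoidHom ∈ 𝒜)
    (hfh : ∀ A ∈ 𝒜, ∀ K : Subgroup A, HasFiniteHeight K → (K : Set A).Finite ∨ K.index ≠ 0)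
    (hchain : ∀ A ∈ 𝒜, ∀ A' ∈ 𝒜, ∃ m : ℕ, ∃ c : Fin (m + 1) → Subgroup G,
      c 0 = A ∧ c (Fin.last m) = A' ∧ (∀ i, c i ∈ 𝒜) ∧
      ∀ i : Fin m, ((c i.castSucc ⊓ c i.succ : Subgroup G) : Set G).Infinite) :
    ∀ A ∈ 𝒜, ((H ⊓ A : Subgroup G) : Set G).Finite :=
  inter_finite_of_finiteHeight_infiniteIndex_general H hH hHindex 𝒜 hinf hconj hfh hchain
end

section
/- For all constants λ ≥ 1, ε ≥ 0 and K > 2 there exist λ1 = λ1(λ,ε,K) ≥ 1 and ε1 = ε1(λ,ε,K) ≥ 0 with the following property. Let X be a geodesic metric space and let γ be a continuous (λ,ε)-quasigeodesic in X parametrized by arc length. Let x1, x2 ∈ X, for i = 1,2 let x'_i be a nearest-point projection of x_i onto the image of γ, let α_i be a geodesic in X from x_i to x'_i, and let γ1 be the subpath of γ from x'_1 to x'_2. If d(x'_1,x'_2) ≥ K·max{d(x1,x'_1), d(x2,x'_2)}, then the concatenation β = α1·γ1·α2⁻¹ (a path from x1 to x2), parametrized by arc length, is a continuous (λ1,ε1)-quasigeodesic.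 -/
open Set

/-- `γ` is a `(λ, ε)`-quasigeodesic on the set `I ⊆ ℝ`. -/
def IsQuasiGeodesicOn {X : Type*} [MetricSpace X] (lam ε : ℝ) (γ : ℝ → X) (I : Set ℝ) : Prop :=
  ∀ s ∈ I, ∀ t ∈ I,
    (1 / lam) * |s - t| - ε ≤ dist (γ s) (γ t) ∧ dist (γ s) (γ t) ≤ lam * |s - t| + ε

/-- `γ` is parametrized by arc length on `[a, b]`: the length of the subpath between
parameters `s ≤ t` equals `t - s`. -/
def IsArcLengthParamOn {X : Type*} [MetricSpace X] (γ : ℝ → X) (a b : ℝ) : Prop :=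
  ∀ s ∈ Icc a b, ∀ t ∈ Icc a b, s ≤ t →
    eVariationOn γ (Icc s t) = ENNReal.ofReal (t - s)

/-- `α : ℝ → X` is a geodesic from `x` to `y`, parametrized by arc length on
`[0, dist x y]`. -/
def IsGeodesicFromTo {X : Type*} [MetricSpace X] (α : ℝ → X) (x y : X) : Prop :=
  α 0 = x ∧ α (dist x y) = y ∧
    ∀ s ∈ Icc 0 (dist x y), ∀ t ∈ Icc 0 (dist x y), dist (α s) (α t) = |s - t|

/-- A geodesic metric space: any two points are joined by a geodesic. -/
def GeodesicSpace (X : Type*) [MetricSpace X] : Prop :=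
  ∀ x y : X, ∃ α : ℝ → X, IsGeodesicFromTo α x y

lemma evar_Icc_split {X : Type} [MetricSpace X] (f : ℝ → X) {a b c : ℝ} (hab : a ≤ b)
    (hbc : b ≤ c) :
    eVariationOn f (Icc a c) = eVariationOn f (Icc a b) + eVariationOn f (Icc b c) := by
  rw [← Icc_union_Icc_eq_Icc hab hbc,
    eVariationOn.union f (isGreatest_Icc hab) (isLeast_Icc hbc)]

lemma evar_Icc_self {X : Type} [MetricSpace X] (f : ℝ → X) (v : ℝ) :
    eVariationOn f (Icc v v) = 0 := by
  rw [Icc_self]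
  exact eVariationOn.subsingleton f subsingleton_singleton

lemma evar_of_isometric {X : Type} [MetricSpace X] {f : ℝ → X} {s t : ℝ} (hst : s ≤ t)
    (h : ∀ u ∈ Icc s t, ∀ v ∈ Icc s t, dist (f u) (f v) = |u - v|) :
    eVariationOn f (Icc s t) = ENNReal.ofReal (t - s) := by
  apply le_antisymm
  · refine iSup_le ?_
    rintro ⟨n, u, hu, us⟩
    calc ∑ i ∈ Finset.range n, edist (f (u (i+1))) (f (u i))
        = ∑ i ∈ Finset.range n, ENNReal.ofReal (u (i+1) - u i) := by
          refine Finset.sum_congr rfl fun i _ => ?_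
          rw [edist_dist, h _ (us _) _ (us _),
            abs_of_nonneg (sub_nonneg.2 (hu (Nat.le_succ i)))]
      _ = ENNReal.ofReal (∑ i ∈ Finset.range n, (u (i+1) - u i)) :=
          (ENNReal.ofReal_sum_of_nonneg (fun i _ => sub_nonneg.2 (hu (Nat.le_succ i)))).symm
      _ = ENNReal.ofReal (u n - u 0) := by rw [Finset.sum_range_sub]
      _ ≤ ENNReal.ofReal (t - s) := by
          apply ENNReal.ofReal_le_ofReal
          have h1 := (us n).2; have h2 := (us 0).1; linarith
  · have hh := eVariationOn.edist_le f (show s ∈ Icc s t from ⟨le_rfl, hst⟩)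
      (show t ∈ Icc s t from ⟨hst, le_rfl⟩)
    rwa [edist_dist, h s ⟨le_rfl, hst⟩ t ⟨hst, le_rfl⟩, abs_of_nonpos (by linarith), neg_sub]
      at hh

lemma lower_from_mul {lam1 ε1 d τ : ℝ} (hlam1 : 0 < lam1) (h : τ ≤ lam1 * d + lam1 * ε1) :
    (1/lam1) * τ - ε1 ≤ d := by
  rw [one_div, ← div_eq_inv_mul, sub_le_iff_le_add, div_le_iff₀ hlam1]
  nlinarith

set_option maxHeartbeats 1600000 in
/-- For all `λ ≥ 1`, `ε ≥ 0`, `K > 2` there are `λ₁ ≥ 1`, `ε₁ ≥ 0` such that: if `γ` is a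
continuous `(λ, ε)`-quasigeodesic parametrized by arc length in a geodesic space `X`,
`x'ᵢ = γ sᵢ` is a nearest-point projection of `xᵢ` onto `γ` and `αᵢ` is a geodesic from `xᵢ`
to `x'ᵢ` (i = 1, 2), and `d(x'₁, x'₂) ≥ K · max{d(x₁, x'₁), d(x₂, x'₂)}`, then the
concatenation `β = α₁ · γ₁ · α₂⁻¹` (from `x₁` to `x₂`, where `γ₁` is the subpath of `γ`
from `x'₁` to `x'₂`), parametrized by arc length, is a continuous `(λ₁, ε₁)`-quasigeodesic. -/
theorem concat_of_projections_is_quasigeodesic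
    (lam ε K : ℝ) (hlam : 1 ≤ lam) (hε : 0 ≤ ε) (hK : 2 < K) :
    ∃ lam1 ε1 : ℝ, 1 ≤ lam1 ∧ 0 ≤ ε1 ∧
      ∀ (X : Type) (_ : MetricSpace X), GeodesicSpace X →
      ∀ (a b : ℝ) (γ : ℝ → X), a ≤ b →
        ContinuousOn γ (Icc a b) →
        IsQuasiGeodesicOn lam ε γ (Icc a b) →
        IsArcLengthParamOn γ a b →
      ∀ (x1 x2 : X) (s1 s2 : ℝ), s1 ∈ Icc a b → s2 ∈ Icc a b →
        (∀ t ∈ Icc a b, dist x1 (γ s1) ≤ dist x1 (γ t)) →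
        (∀ t ∈ Icc a b, dist x2 (γ s2) ≤ dist x2 (γ t)) →
      ∀ α1 α2 : ℝ → X,
        IsGeodesicFromTo α1 x1 (γ s1) →
        IsGeodesicFromTo α2 x2 (γ s2) →
        K * max (dist x1 (γ s1)) (dist x2 (γ s2)) ≤ dist (γ s1) (γ s2) →
        -- the concatenation `β = α₁ · γ₁ · α₂⁻¹`, parametrized by arc length
        letI d1 : ℝ := dist x1 (γ s1)
        letI d2 : ℝ := dist x2 (γ s2)
        letI m : ℝ := |s2 - s1|
        letI β : ℝ → X := fun t =>
          if t ≤ d1 then α1 t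
          else if t ≤ d1 + m then
            γ (if s1 ≤ s2 then s1 + (t - d1) else s1 - (t - d1))
          else α2 (d1 + m + d2 - t)
        ContinuousOn β (Icc 0 (d1 + m + d2)) ∧
        IsQuasiGeodesicOn lam1 ε1 β (Icc 0 (d1 + m + d2)) ∧
        IsArcLengthParamOn β 0 (d1 + m + d2) := by
  have hK2 : (0:ℝ) < K - 2 := by linarith
  have hK0 : (0:ℝ) < K := by linarith
  have hlam0 : (0:ℝ) < lam := by linarith
  have hc0 : 0 < (2 + lam*K)/(K-2) := div_pos (by nlinarith) hK2
  refine ⟨3*lam + (2 + lam*K)/(K-2), (lam + 2)*ε + 1, by linarith [hc0],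
    by nlinarith [mul_nonneg (show (0:ℝ) ≤ lam + 2 by linarith) hε], ?_⟩
  set c : ℝ := (2 + lam*K)/(K-2) with hcdef
  set lam1 : ℝ := 3*lam + c with hlam1def
  set ε1 : ℝ := (lam + 2)*ε + 1 with hε1def
  have hcK : c * (K - 2) = 2 + lam*K := div_mul_cancel₀ _ (ne_of_gt hK2)
  have hlam1_1 : 1 ≤ lam1 := by rw [hlam1def]; linarith [hc0]
  have hlam1_0 : 0 < lam1 := by linarith
  have hε1_0 : 0 ≤ ε1 := by
    rw [hε1def]; nlinarith [mul_nonneg (show (0:ℝ) ≤ lam + 2 by linarith) hε]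
  intro X _ _hgeo a b γ hab hγc hγq hγarc x1 x2 s1 s2 hs1 hs2 hp1 hp2 α1 α2 hα1 hα2 hKb
  obtain ⟨hα1a, hα1b, hα1iso⟩ := hα1
  obtain ⟨hα2a, hα2b, hα2iso⟩ := hα2
  set d1 := dist x1 (γ s1) with hd1
  set d2 := dist x2 (γ s2) with hd2
  set m := |s2 - s1| with hm
  set L := d1 + m + d2 with hL
  set β : ℝ → X := fun t =>
    if t ≤ d1 then α1 t
    else if t ≤ d1 + m then γ (if s1 ≤ s2 then s1 + (t - d1) else s1 - (t - d1))
    else α2 (L - t) with hβdef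
  set σ : ℝ → ℝ := fun t => if s1 ≤ s2 then s1 + (t - d1) else s1 - (t - d1) with hσdef
  have hd1nn : 0 ≤ d1 := dist_nonneg
  have hd2nn : 0 ≤ d2 := dist_nonneg
  have hmnn : 0 ≤ m := abs_nonneg _
  have hLv : L = d1 + m + d2 := hL
  clear_value β σ L lam1 ε1 c m d1 d2
  clear hcdef hd1 hd2 hL
  -- basic description of β on the three pieces
  have hβ1 : ∀ t, t ≤ d1 → β t = α1 t := by
    intro t ht; simp only [hβdef]; rw [if_pos ht]
  have hσd1 : σ d1 = s1 := by
    simp only [hσdef]; split <;> ring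
  have hσfacts : ∀ t ∈ Icc d1 (d1 + m),
      σ t ∈ Icc a b ∧ |s1 - σ t| = t - d1 ∧ |s2 - σ t| = d1 + m - t := by
    intro t ht
    obtain ⟨ht1, ht2⟩ := ht
    by_cases h12 : s1 ≤ s2
    · have hmv : m = s2 - s1 := by rw [hm, abs_of_nonneg (by linarith)]
      have hσt : σ t = s1 + (t - d1) := by simp only [hσdef, if_pos h12]
      refine ⟨⟨by rw [hσt]; linarith [hs1.1], by rw [hσt]; linarith [hs2.2]⟩, ?_, ?_⟩
      · rw [hσt, show s1 - (s1 + (t - d1)) = -(t - d1) by ring, abs_neg,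
          abs_of_nonneg (by linarith)]
      · rw [hσt, show s2 - (s1 + (t - d1)) = (s2 - s1) - (t - d1) by ring, ← hmv,
          abs_of_nonneg (by linarith)]
        ring
    · push_neg at h12
      have hmv : m = s1 - s2 := by rw [hm, abs_of_nonpos (by linarith), neg_sub]
      have hσt : σ t = s1 - (t - d1) := by simp only [hσdef, if_neg (not_le.2 h12)]
      refine ⟨⟨by rw [hσt]; linarith [hs2.1], by rw [hσt]; linarith [hs1.2]⟩, ?_, ?_⟩
      · rw [hσt, show s1 - (s1 - (t - d1)) = t - d1 by ring, abs_of_nonneg (by linarith)]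
      · rw [hσt, show s2 - (s1 - (t - d1)) = (t - d1) - (s1 - s2) by ring, ← hmv,
          abs_of_nonpos (by linarith), neg_sub]
        ring
  have hσdiff : ∀ p q : ℝ, |σ p - σ q| = |p - q| := by
    intro p q
    by_cases h12 : s1 ≤ s2
    · simp only [hσdef, if_pos h12]
      rw [show s1 + (p - d1) - (s1 + (q - d1)) = p - q by ring]
    · simp only [hσdef, if_neg h12]
      rw [show s1 - (p - d1) - (s1 - (q - d1)) = -(p - q) by ring, abs_neg]
  have hβ2 : ∀ t, d1 ≤ t → t ≤ d1 + m → β t = γ (σ t) := by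
    intro t h1 h2
    by_cases ht : t ≤ d1
    · have heq : t = d1 := le_antisymm ht h1
      rw [heq, hβ1 d1 le_rfl, hσd1]
      exact hα1b
    · simp only [hβdef, hσdef]; rw [if_neg ht, if_pos h2]
  have hσm : σ (d1 + m) = s2 := by
    by_cases h12 : s1 ≤ s2
    · have hmv : m = s2 - s1 := by rw [hm, abs_of_nonneg (by linarith)]
      simp only [hσdef, if_pos h12]; linarith
    · push_neg at h12
      have hmv : m = s1 - s2 := by rw [hm, abs_of_nonpos (by linarith), neg_sub]
      simp only [hσdef, if_neg (not_le.2 h12)]; linarith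
  have hβ3 : ∀ t, d1 + m ≤ t → t ≤ L → β t = α2 (L - t) := by
    intro t h1 h2
    by_cases ht2 : t ≤ d1 + m
    · have heq : t = d1 + m := le_antisymm ht2 h1
      have hmid : β t = γ (σ t) := hβ2 t (by linarith) ht2
      rw [hmid, heq, hσm, show L - (d1 + m) = d2 by rw [hLv]; ring]
      exact hα2b.symm
    · simp only [hβdef]
      rw [if_neg (show ¬ t ≤ d1 by push_neg at ht2 ⊢; linarith), if_neg ht2]
  -- distances to the endpoints on the geodesic pieces
  have hP1 : ∀ s ∈ Icc (0:ℝ) d1, dist x1 (β s) = s ∧ dist (γ s1) (β s) = d1 - s := by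
    intro s hs
    rw [hβ1 s hs.2, ← hα1a, ← hα1b]
    constructor
    · rw [hα1iso 0 ⟨le_rfl, hd1nn⟩ s hs, zero_sub, abs_neg, abs_of_nonneg hs.1]
    · rw [hα1iso d1 ⟨hd1nn, le_rfl⟩ s hs, abs_of_nonneg (by linarith [hs.2])]
  have hP3 : ∀ t ∈ Icc (d1 + m) L, dist x2 (β t) = L - t ∧ dist (γ s2) (β t) = t - (d1 + m) := by
    intro t ht
    have hLt0 : 0 ≤ L - t := by linarith [ht.2]
    have hLt2 : L - t ≤ d2 := by
      have := ht.1; linarith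
    rw [hβ3 t ht.1 ht.2, ← hα2a, ← hα2b]
    constructor
    · rw [hα2iso 0 ⟨le_rfl, hd2nn⟩ (L - t) ⟨hLt0, hLt2⟩, zero_sub, abs_neg,
        abs_of_nonneg hLt0]
    · rw [hα2iso d2 ⟨hd2nn, le_rfl⟩ (L - t) ⟨hLt0, hLt2⟩,
        abs_of_nonneg (by linarith)]
      rw [hLv]; ring
  -- the multiplied form of the lower quasigeodesic bound for γ
  have hql : ∀ u ∈ Icc a b, ∀ v ∈ Icc a b, |u - v| ≤ lam * (dist (γ u) (γ v) + ε) := by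
    intro u hu v hv
    have h := (hγq u hu v hv).1
    rw [sub_le_iff_le_add, one_div, inv_mul_le_iff₀ hlam0] at h
    linarith
  -- arc-length parametrization of β
  have V1 : ∀ u v : ℝ, 0 ≤ u → u ≤ v → v ≤ d1 →
      eVariationOn β (Icc u v) = ENNReal.ofReal (v - u) := by
    intro u v h0 huv hv
    apply evar_of_isometric huv
    intro p hp q hq
    have hp' : p ∈ Icc 0 d1 := ⟨by linarith [hp.1], by linarith [hp.2]⟩
    have hq' : q ∈ Icc 0 d1 := ⟨by linarith [hq.1], by linarith [hq.2]⟩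
    rw [hβ1 p hp'.2, hβ1 q hq'.2]
    exact hα1iso p hp' q hq'
  have V3 : ∀ u v : ℝ, d1 + m ≤ u → u ≤ v → v ≤ L →
      eVariationOn β (Icc u v) = ENNReal.ofReal (v - u) := by
    intro u v h0 huv hv
    apply evar_of_isometric huv
    intro p hp q hq
    have hp1' : d1 + m ≤ p := le_trans h0 hp.1
    have hq1' : d1 + m ≤ q := le_trans h0 hq.1
    have hpL : p ≤ L := le_trans hp.2 hv
    have hqL : q ≤ L := le_trans hq.2 hv
    rw [hβ3 p hp1' hpL, hβ3 q hq1' hqL,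
      hα2iso (L - p) ⟨by linarith, by linarith⟩
        (L - q) ⟨by linarith, by linarith⟩,
      show L - p - (L - q) = -(p - q) by ring, abs_neg]
  have V2 : ∀ u v : ℝ, d1 ≤ u → u ≤ v → v ≤ d1 + m →
      eVariationOn β (Icc u v) = ENNReal.ofReal (v - u) := by
    intro u v h0 huv hv
    have hEq : EqOn β (γ ∘ σ) (Icc u v) := fun r hr =>
      hβ2 r (le_trans h0 hr.1) (le_trans hr.2 hv)
    rw [eVariationOn.eq_of_eqOn hEq]
    obtain ⟨huab, -, -⟩ := hσfacts u ⟨h0, le_trans huv hv⟩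
    obtain ⟨hvab, -, -⟩ := hσfacts v ⟨le_trans h0 huv, hv⟩
    by_cases h12 : s1 ≤ s2
    · have hσu : σ u = u + (s1 - d1) := by simp only [hσdef, if_pos h12]; ring
      have hσv : σ v = v + (s1 - d1) := by simp only [hσdef, if_pos h12]; ring
      have hEq2 : EqOn (γ ∘ σ) (γ ∘ (fun r => r + (s1 - d1))) (Icc u v) := by
        intro r _
        simp only [Function.comp_apply, hσdef, if_pos h12]
        rw [show s1 + (r - d1) = r + (s1 - d1) by ring]
      rw [eVariationOn.eq_of_eqOn hEq2,
        eVariationOn.comp_eq_of_monotoneOn γ _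
          ((show Monotone (fun r : ℝ => r + (s1 - d1)) from
            fun x y h => by dsimp; linarith).monotoneOn _),
        show (fun r => r + (s1 - d1)) '' Icc u v = Icc (u + (s1 - d1)) (v + (s1 - d1)) from
          Set.image_add_const_Icc _ _ _,
        hγarc _ (hσu ▸ huab) _ (hσv ▸ hvab) (by linarith)]
      congr 1; ring
    · push_neg at h12
      have hσu : σ u = (s1 + d1) - u := by simp only [hσdef, if_neg (not_le.2 h12)]; ring
      have hσv : σ v = (s1 + d1) - v := by simp only [hσdef, if_neg (not_le.2 h12)]; ring
      have hEq2 : EqOn (γ ∘ σ) (γ ∘ (fun r => (s1 + d1) - r)) (Icc u v) := by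
        intro r _
        simp only [Function.comp_apply, hσdef, if_neg (not_le.2 h12)]
        rw [show s1 - (r - d1) = (s1 + d1) - r by ring]
      have hanti : Antitone (fun r : ℝ => (s1 + d1) - r) := fun x y h => by
        simp only; linarith
      rw [eVariationOn.eq_of_eqOn hEq2,
        eVariationOn.comp_eq_of_antitoneOn γ _ (hanti.antitoneOn _),
        show (fun r => (s1 + d1) - r) '' Icc u v = Icc ((s1 + d1) - v) ((s1 + d1) - u) from
          Set.image_const_sub_Icc _ _ _,
        hγarc _ (hσv ▸ hvab) _ (hσu ▸ huab) (by linarith)]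
      congr 1; ring
  have harc : IsArcLengthParamOn β 0 L := by
    intro s hs t ht hst
    set c1 := max s (min d1 t) with hc1
    set c2 := max s (min (d1 + m) t) with hc2
    have hsc1 : s ≤ c1 := le_max_left _ _
    have hc1c2 : c1 ≤ c2 := max_le_max le_rfl (min_le_min (by linarith) le_rfl)
    have hc2t : c2 ≤ t := max_le hst (min_le_right _ _)
    rw [evar_Icc_split β hsc1 (le_trans hc1c2 hc2t), evar_Icc_split β hc1c2 hc2t]
    have e1 : eVariationOn β (Icc s c1) = ENNReal.ofReal (c1 - s) := by
      rcases le_total s d1 with h | h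
      · exact V1 s c1 hs.1 hsc1 (max_le h (min_le_left _ _))
      · have hcs : c1 = s := max_eq_left (le_trans (min_le_left _ _) h)
        rw [hcs, evar_Icc_self, sub_self, ENNReal.ofReal_zero]
    have e2 : eVariationOn β (Icc c1 c2) = ENNReal.ofReal (c2 - c1) := by
      rcases le_total t d1 with h | h
      · have h1 : c1 = t := by rw [hc1, min_eq_right h, max_eq_right hst]
        have h2 : c2 = t := by rw [hc2, min_eq_right (by linarith), max_eq_right hst]
        rw [h1, h2, evar_Icc_self, sub_self, ENNReal.ofReal_zero]
      · rcases le_total s (d1 + m) with h2 | h2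
        · refine V2 c1 c2 ?_ hc1c2 ?_
          · exact le_max_of_le_right (le_of_eq (min_eq_left h).symm)
          · exact max_le h2 (min_le_left _ _)
        · have h1' : c1 = s := max_eq_left (le_trans (min_le_left _ _) (by linarith))
          have h2' : c2 = s := max_eq_left (le_trans (min_le_left _ _) h2)
          rw [h1', h2', evar_Icc_self, sub_self, ENNReal.ofReal_zero]
    have e3 : eVariationOn β (Icc c2 t) = ENNReal.ofReal (t - c2) := by
      rcases le_total t (d1 + m) with h | h
      · have h2 : c2 = t := by rw [hc2, min_eq_right h, max_eq_right hst]
        rw [h2, evar_Icc_self, sub_self, ENNReal.ofReal_zero]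
      · refine V3 c2 t ?_ hc2t ht.2
        exact le_max_of_le_right (le_of_eq (min_eq_left h).symm)
    rw [e1, e2, e3,
      ← ENNReal.ofReal_add (by linarith) (by linarith),
      ← ENNReal.ofReal_add (by linarith) (by linarith)]
    congr 1; ring
  -- 1-Lipschitz upper bound from arc-length
  have hlip : ∀ p ∈ Icc (0:ℝ) L, ∀ q ∈ Icc (0:ℝ) L, dist (β p) (β q) ≤ |p - q| := by
    have base : ∀ p ∈ Icc (0:ℝ) L, ∀ q ∈ Icc (0:ℝ) L, p ≤ q → dist (β p) (β q) ≤ q - p := by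
      intro p hp q hq hpq
      have hh := eVariationOn.edist_le β (show p ∈ Icc p q from ⟨le_rfl, hpq⟩)
        (show q ∈ Icc p q from ⟨hpq, le_rfl⟩)
      rw [harc p hp q hq hpq, edist_dist] at hh
      exact (ENNReal.ofReal_le_ofReal_iff (by linarith)).1 hh
    intro p hp q hq
    rcases le_total p q with h | h
    · rw [abs_of_nonpos (by linarith), neg_sub]; exact base p hp q hq h
    · rw [abs_of_nonneg (by linarith), dist_comm]; exact base q hq p hp h
  -- the lower quasigeodesic bound
  have key : ∀ p ∈ Icc (0:ℝ) L, ∀ q ∈ Icc (0:ℝ) L, p ≤ q →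
      (1/lam1) * (q - p) - ε1 ≤ dist (β p) (β q) := by
    intro p hp q hq hpq
    have hdd0 : 0 ≤ dist (β p) (β q) := dist_nonneg
    apply lower_from_mul hlam1_0
    by_cases h1 : q ≤ d1
    · -- both on α1
      rw [hβ1 p (le_trans hpq h1), hβ1 q h1,
        hα1iso p ⟨hp.1, le_trans hpq h1⟩ q ⟨hq.1, h1⟩, abs_of_nonpos (by linarith), neg_sub]
      nlinarith [mul_le_mul_of_nonneg_right hlam1_1 (show (0:ℝ) ≤ q - p by linarith),
        mul_nonneg hlam1_0.le hε1_0]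
    · push_neg at h1
      by_cases h2 : q ≤ d1 + m
      · by_cases h3 : p ≤ d1
        · -- p on α1, q on γ
          obtain ⟨hA1, hA2⟩ := hP1 p ⟨hp.1, h3⟩
          have hbq : β q = γ (σ q) := hβ2 q h1.le h2
          obtain ⟨hqab, hq1, -⟩ := hσfacts q ⟨h1.le, h2⟩
          have hproj : d1 ≤ dist x1 (γ (σ q)) := hp1 _ hqab
          have tri1 : dist x1 (γ (σ q)) ≤ dist x1 (β p) + dist (β p) (β q) := by
            rw [hbq]; exact dist_triangle _ _ _
          rw [hA1] at tri1
          have hA : d1 - p ≤ dist (β p) (β q) := by linarith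
          have tri2 : dist (γ s1) (γ (σ q)) ≤ dist (γ s1) (β p) + dist (β p) (β q) := by
            rw [hbq]; exact dist_triangle _ _ _
          rw [hA2] at tri2
          have hq' := hql s1 hs1 (σ q) hqab
          rw [hq1] at hq'
          nlinarith [mul_le_mul_of_nonneg_left tri2 hlam0.le,
            mul_le_mul_of_nonneg_left hA hlam0.le,
            mul_nonneg (sub_nonneg.2 hlam) hdd0,
            mul_nonneg hc0.le hdd0,
            mul_le_mul_of_nonneg_right hlam1_1 hε1_0]
        · -- both on γ
          push_neg at h3
          have hbp : β p = γ (σ p) := hβ2 p h3.le (by linarith)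
          have hbq : β q = γ (σ q) := hβ2 q h1.le h2
          obtain ⟨hpab, -, -⟩ := hσfacts p ⟨h3.le, by linarith⟩
          obtain ⟨hqab, -, -⟩ := hσfacts q ⟨h1.le, h2⟩
          have hd := hql (σ p) hpab (σ q) hqab
          rw [hσdiff p q, abs_of_nonpos (by linarith), neg_sub] at hd
          rw [hbp, hbq]
          nlinarith [dist_nonneg (x := γ (σ p)) (y := γ (σ q)),
            mul_nonneg (show (0:ℝ) ≤ 2*lam + c by linarith)
              (dist_nonneg (x := γ (σ p)) (y := γ (σ q))),
            mul_le_mul_of_nonneg_right hlam1_1 hε1_0]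
      · push_neg at h2
        by_cases h3 : p ≤ d1
        · -- p on α1, q on α2 : the main case
          obtain ⟨hA1, hA2⟩ := hP1 p ⟨hp.1, h3⟩
          obtain ⟨hC1, hC2⟩ := hP3 q ⟨h2.le, hq.2⟩
          have htri : dist (γ s1) (γ s2) ≤
              dist (γ s1) (β p) + dist (β p) (β q) + dist (β q) (γ s2) :=
            dist_triangle4 _ _ _ _
          rw [hA2, dist_comm (β q) (γ s2), hC2] at htri
          have hmax1 : K * d1 ≤ dist (γ s1) (γ s2) :=
            le_trans (mul_le_mul_of_nonneg_left (le_max_left _ _) hK0.le) hKb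
          have hmax2 : K * d2 ≤ dist (γ s1) (γ s2) :=
            le_trans (mul_le_mul_of_nonneg_left (le_max_right _ _) hK0.le) hKb
          have hmD := hql s1 hs1 s2 hs2
          rw [abs_sub_comm, ← hm] at hmD
          have hq2L : q ≤ d1 + m + d2 := by rw [← hLv]; exact hq.2
          have h1' : (K - 2) * dist (γ s1) (γ s2) ≤ K * dist (β p) (β q) := by
            nlinarith [mul_le_mul_of_nonneg_left htri hK0.le,
              mul_nonneg hK0.le hp.1,
              mul_le_mul_of_nonneg_left hq2L hK0.le]
          have h2' : K * (q - p) ≤ (2 + K*lam) * dist (γ s1) (γ s2) + K*lam*ε := by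
            nlinarith [mul_le_mul_of_nonneg_left hmD hK0.le,
              mul_nonneg hK0.le hp.1,
              mul_le_mul_of_nonneg_left hq2L hK0.le]
          have e3 : (2:ℝ) + K*lam = c*(K-2) := by rw [hcK]; ring
          have e1 : (2 + K*lam) * ((K - 2) * dist (γ s1) (γ s2)) ≤
              c*(K-2) * (K * dist (β p) (β q)) := by
            rw [← e3]
            exact mul_le_mul_of_nonneg_left h1' (by nlinarith)
          have e2 : (K - 2) * (K * (q - p)) ≤
              (K - 2) * ((2 + K*lam) * dist (γ s1) (γ s2) + K*lam*ε) :=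
            mul_le_mul_of_nonneg_left h2' hK2.le
          have hτ : (K - 2) * K * (q - p) ≤
              (K - 2) * K * (c * dist (β p) (β q) + lam * ε) := by nlinarith [e1, e2]
          have hKK : (0:ℝ) < (K - 2) * K := mul_pos hK2 hK0
          have hfin : q - p ≤ c * dist (β p) (β q) + lam * ε :=
            le_of_mul_le_mul_left (by linarith [hτ]) hKK
          nlinarith [mul_nonneg (show (0:ℝ) ≤ 3*lam by linarith) hdd0,
            mul_le_mul_of_nonneg_right hlam1_1 hε1_0]
        · push_neg at h3
          by_cases h4 : p ≤ d1 + m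
          · -- p on γ, q on α2
            have hbp : β p = γ (σ p) := hβ2 p h3.le h4
            obtain ⟨hpab, -, hp2'⟩ := hσfacts p ⟨h3.le, h4⟩
            obtain ⟨hC1, hC2⟩ := hP3 q ⟨h2.le, hq.2⟩
            have hproj : d2 ≤ dist x2 (β p) := by rw [hbp]; exact hp2 _ hpab
            have tri1 : dist x2 (β p) ≤ dist x2 (β q) + dist (β q) (β p) :=
              dist_triangle _ _ _
            rw [hC1, dist_comm (β q) (β p)] at tri1
            have hC : q - (d1 + m) ≤ dist (β p) (β q) := by linarith
            have tri2 : dist (γ s2) (β p) ≤ dist (γ s2) (β q) + dist (β q) (β p) :=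
              dist_triangle _ _ _
            rw [hC2, dist_comm (β q) (β p)] at tri2
            have hq' : d1 + m - p ≤ lam * (dist (γ s2) (β p) + ε) := by
              rw [hbp, ← hp2']
              exact hql s2 hs2 (σ p) hpab
            nlinarith [mul_le_mul_of_nonneg_left tri2 hlam0.le,
              mul_le_mul_of_nonneg_left hC hlam0.le,
              mul_nonneg (sub_nonneg.2 hlam) hdd0,
              mul_nonneg hc0.le hdd0,
              mul_le_mul_of_nonneg_right hlam1_1 hε1_0]
          · -- both on α2
            push_neg at h4
            have hpL : p ≤ L := le_trans hpq hq.2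
            rw [hβ3 p h4.le hpL, hβ3 q (by linarith) hq.2,
              hα2iso (L - p) ⟨by linarith, by linarith⟩
                (L - q) ⟨by linarith [hq.2], by linarith⟩,
              show L - p - (L - q) = q - p by ring, abs_of_nonneg (by linarith)]
            nlinarith [mul_le_mul_of_nonneg_right hlam1_1 (show (0:ℝ) ≤ q - p by linarith),
              mul_nonneg hlam1_0.le hε1_0]
  refine ⟨?_, ?_, harc⟩
  · -- continuity
    have hl : LipschitzOnWith 1 β (Icc 0 L) := by
      apply LipschitzOnWith.mk_one
      intro x hx y hy
      rw [Real.dist_eq]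
      exact hlip x hx y hy
    exact hl.continuousOn
  · -- quasigeodesic
    intro p hp q hq
    constructor
    · rcases le_total p q with h | h
      · rw [abs_of_nonpos (by linarith), neg_sub]
        exact key p hp q hq h
      · rw [abs_of_nonneg (by linarith), dist_comm]
        exact key q hq p hp h
    · have h1 := hlip p hp q hq
      nlinarith [abs_nonneg (p - q), mul_le_mul_of_nonneg_right hlam1_1 (abs_nonneg (p - q)),
        mul_nonneg hlam1_0.le hε1_0]
end

section
/- For all constants λ ≥ 1, ε ≥ 0, σ ≥ 0, every Morse gauge M : [1,∞)×[0,∞) → [0,∞) and every function f : [0,∞) → [0,∞), there is a number b = b(λ,ε,σ,M,f) such that the following holds. Let X be a geodesic metric space, let A be an M-Morse subset of X, and let 𝓑 be a collection of (λ,ε,σ)-quasiconvex subsets of X such that A has f-bounded penetration with respect to 𝓑. Then for each B ∈ 𝓑 and each r > 0, diam(N_r(A) ∩ B) ≤ 7r + b. -/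
/-!
Let `x, y ∈ N_r(A) ∩ B` be far apart, let `a, a' ∈ A` be `(r + 1)`-close to them and let `γ` be a
quasigeodesic from `x` to `y` near `B`. Let `γ τ₁` be the last point of `γ` near `a` and `γ τ₂`
the first later point near `a'`. Prolonging `γ|[τ₁, τ₂]` by geodesics from `a` and to `a'` gives a
`(5λ, ε)`-quasigeodesic: the prolongations cannot be short-cut since `γ τ₁`, `γ τ₂` are almost
closest to `a`, `a'` on `γ|[τ₁, τ₂]`, and they are short compared with `d(γ τ₁, γ τ₂)` as soon as
`d(x, y) ≥ 7 (r + 1) + 5ε` (four of the seven are spent reaching `γ τ₁` and `γ τ₂`). By the Morse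
property `γ τ₁` and `γ τ₂` are `M(5λ, ε)`-close to `A`, hence near points of `B` in a fixed
thickening of `A`, whose distance is bounded by the penetration function.
-/

open Set

/-- `A` is `M`-Morse: every `(λ, ε)`-quasigeodesic with endpoints in `A` lies in the
`M(λ, ε)`-neighborhood of `A`. -/
def IsMorseWith {X : Type*} [MetricSpace X] (M : ℝ → ℝ → ℝ) (A : Set X) : Prop :=
  ∀ lam ε : ℝ, 1 ≤ lam → 0 ≤ ε →
    ∀ (a b : ℝ) (γ : ℝ → X), a ≤ b →
      IsQuasiGeodesicOn lam ε γ (Icc a b) → γ a ∈ A → γ b ∈ A →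
      ∀ t ∈ Icc a b, Metric.infDist (γ t) A ≤ M lam ε

/-- `B` is `(λ, ε, σ)`-quasiconvex: any two points of `B` are joined by a
`(λ, ε)`-quasigeodesic whose image lies in the `σ`-neighborhood of `B`. -/
def IsQuasiconvexWith {X : Type*} [MetricSpace X] (lam ε σ : ℝ) (B : Set X) : Prop :=
  ∀ x ∈ B, ∀ y ∈ B, ∃ (a b : ℝ) (γ : ℝ → X), a ≤ b ∧ γ a = x ∧ γ b = y ∧
    IsQuasiGeodesicOn lam ε γ (Icc a b) ∧ ∀ t ∈ Icc a b, Metric.infDist (γ t) B ≤ σ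

/-- `A` has `f`-bounded penetration with respect to the collection `𝓑`:
`diam (N_r(A) ∩ B) ≤ f r` for all `B ∈ 𝓑` and `r ≥ 0`. -/
def HasBoundedPenetrationWith {X : Type*} [MetricSpace X]
    (f : ℝ → ℝ) (A : Set X) (𝓑 : Set (Set X)) : Prop :=
  ∀ B ∈ 𝓑, ∀ r : ℝ, 0 ≤ r →
    EMetric.diam (Metric.cthickening r A ∩ B) ≤ ENNReal.ofReal (f r)

open Metric

theorem eqOn_piecewise_Iic_of_eq {α β : Type*} [LinearOrder α] {f g : α → β} {τ : α}
    (h : f τ = g τ) :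
    EqOn ((Iic τ).piecewise f g) g (Ici τ) := by
  intro s hs
  rcases (mem_Ici.1 hs).eq_or_lt with rfl | hlt
  · rw [piecewise_eq_of_mem _ _ _ (mem_Iic.2 le_rfl), h]
  · exact piecewise_eq_of_notMem _ _ _ (not_le.2 hlt)

variable {X : Type*} [MetricSpace X]

namespace IsQuasiGeodesicOn

variable {lam ε : ℝ} {γ : ℝ → X}

theorem mono {I J : Set ℝ} (h : IsQuasiGeodesicOn lam ε γ I) (hJI : J ⊆ I) :
    IsQuasiGeodesicOn lam ε γ J :=
  fun s hs t ht => h s (hJI hs) t (hJI ht)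

theorem congr {γ' : ℝ → X} {I : Set ℝ} (h : IsQuasiGeodesicOn lam ε γ I) (hγ : EqOn γ' γ I) :
    IsQuasiGeodesicOn lam ε γ' I := by
  intro s hs t ht
  rw [hγ hs, hγ ht]
  exact h s hs t ht

theorem comp_neg {s₀ s₁ : ℝ} (h : IsQuasiGeodesicOn lam ε γ (Icc s₀ s₁)) :
    IsQuasiGeodesicOn lam ε (fun t => γ (-t)) (Icc (-s₁) (-s₀)) := by
  intro s hs t ht
  have := h (-s) ⟨le_neg.2 hs.2, neg_le.1 hs.1⟩ (-t) ⟨le_neg.2 ht.2, neg_le.1 ht.1⟩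
  rwa [neg_sub_neg, abs_sub_comm] at this

end IsQuasiGeodesicOn

theorem isQuasiGeodesicOn_iff_forall_le {lam ε : ℝ} {γ : ℝ → X} {I : Set ℝ} (hlam : 0 < lam) :
    IsQuasiGeodesicOn lam ε γ I ↔ ∀ s ∈ I, ∀ t ∈ I, s ≤ t →
      t - s ≤ lam * (dist (γ s) (γ t) + ε) ∧ dist (γ s) (γ t) ≤ lam * (t - s) + ε := by
  have key : ∀ s t, s ≤ t → ((1 / lam) * |s - t| - ε ≤ dist (γ s) (γ t) ↔
      t - s ≤ lam * (dist (γ s) (γ t) + ε)) := fun s t hst => by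
    rw [abs_of_nonpos (sub_nonpos.2 hst), neg_sub, one_div_mul_eq_div, sub_le_iff_le_add,
      div_le_iff₀' hlam]
  constructor
  · intro h s hs t ht hst
    obtain ⟨hlow, hup⟩ := h s hs t ht
    rw [abs_of_nonpos (sub_nonpos.2 hst), neg_sub] at hup
    exact ⟨(key s t hst).1 hlow, hup⟩
  · intro h s hs t ht
    rcases le_total s t with hst | hts
    · obtain ⟨hlow, hup⟩ := h s hs t ht hst
      rw [key s t hst, abs_of_nonpos (sub_nonpos.2 hst), neg_sub]
      exact ⟨hlow, hup⟩
    · obtain ⟨hlow, hup⟩ := h t ht s hs hts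
      rw [dist_comm, abs_sub_comm, key t s hts, abs_of_nonpos (sub_nonpos.2 hts), neg_sub]
      exact ⟨hlow, hup⟩

theorem IsQuasiGeodesicOn.weaken {lam lam' ε : ℝ} {γ : ℝ → X} {I : Set ℝ}
    (h : IsQuasiGeodesicOn lam ε γ I) (hlam : 0 < lam) (hle : lam ≤ lam') :
    IsQuasiGeodesicOn lam' ε γ I := by
  rw [isQuasiGeodesicOn_iff_forall_le (hlam.trans_le hle)]
  intro s hs t ht hst
  obtain ⟨h₁, h₂⟩ := (isQuasiGeodesicOn_iff_forall_le hlam).1 h s hs t ht hst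
  have : 0 ≤ lam * (dist (γ s) (γ t) + ε) := by linarith
  constructor <;> nlinarith [(mul_nonneg_iff_of_pos_left hlam).1 this]

namespace IsQuasiGeodesicOn

variable {lam ε : ℝ} {γ : ℝ → X} {s₀ s₁ ρ : ℝ} {z : X}

theorem exists_last_exit (h : IsQuasiGeodesicOn lam ε γ (Icc s₀ s₁)) (hlam : 0 < lam) (hε : 0 ≤ ε)
    (hs : s₀ ≤ s₁) (h₀ : dist z (γ s₀) ≤ ρ) :
    ∃ τ ∈ Icc s₀ s₁, dist z (γ τ) ≤ ρ + ε ∧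
      ∀ t ∈ Icc τ s₁, dist z (γ τ) ≤ dist z (γ t) + ε := by
  set S := {t ∈ Icc s₀ s₁ | dist z (γ t) ≤ ρ}
  have hs₀ : s₀ ∈ S := ⟨⟨le_rfl, hs⟩, h₀⟩
  have hbdd : BddAbove S := ⟨s₁, fun t ht => ht.1.2⟩
  have hτ : sSup S ∈ Icc s₀ s₁ := ⟨le_csSup hbdd hs₀, csSup_le ⟨s₀, hs₀⟩ fun t ht => ht.1.2⟩
  -- `γ` is only coarsely continuous, so at the supremum we lose the additive constant `ε`.
  have hclose : dist z (γ (sSup S)) ≤ ρ + ε := by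
    refine le_of_forall_pos_le_add fun δ hδ => ?_
    obtain ⟨t, ht, hτt⟩ := exists_lt_of_lt_csSup ⟨s₀, hs₀⟩ (sub_lt_self (sSup S) (div_pos hδ hlam))
    have hγ := (h (sSup S) hτ t ht.1).2
    rw [abs_of_nonneg (sub_nonneg.2 (le_csSup hbdd ht))] at hγ
    have hshort : lam * (sSup S - t) ≤ δ := by
      rw [← le_div_iff₀' hlam]
      linarith
    linarith [dist_triangle z (γ t) (γ (sSup S)), dist_comm (γ t) (γ (sSup S)), ht.2]
  refine ⟨sSup S, hτ, hclose, fun t ht => ?_⟩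
  rcases ht.1.eq_or_lt with rfl | hlt
  · linarith
  · have hfar : ρ < dist z (γ t) :=
      not_le.1 fun hle => (le_csSup hbdd ⟨⟨hτ.1.trans ht.1, ht.2⟩, hle⟩).not_gt hlt
    linarith

theorem exists_first_entry (h : IsQuasiGeodesicOn lam ε γ (Icc s₀ s₁)) (hlam : 0 < lam) (hε : 0 ≤ ε)
    (hs : s₀ ≤ s₁) (h₁ : dist z (γ s₁) ≤ ρ) :
    ∃ τ ∈ Icc s₀ s₁, dist z (γ τ) ≤ ρ + ε ∧
      ∀ t ∈ Icc s₀ τ, dist z (γ τ) ≤ dist z (γ t) + ε := by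
  obtain ⟨τ, hτ, hclose, hnear⟩ :=
    h.comp_neg.exists_last_exit hlam hε (neg_le_neg hs) (by simpa only [neg_neg] using h₁)
  refine ⟨-τ, ⟨le_neg.2 hτ.2, neg_le.1 hτ.1⟩, hclose, fun t ht => ?_⟩
  simpa only [neg_neg] using hnear (-t) ⟨le_neg.2 ht.2, neg_le_neg ht.1⟩

end IsQuasiGeodesicOn

section Concatenation

variable {lam ε u₀ u₁ u₂ u₃ : ℝ} {Q : ℝ → X}

theorem dist_eq_sub_of_isometric {I : Set ℝ}
    (hiso : ∀ s ∈ I, ∀ t ∈ I, dist (Q s) (Q t) = |s - t|) {s t : ℝ} (hs : s ∈ I) (ht : t ∈ I)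
    (hst : s ≤ t) : dist (Q s) (Q t) = t - s := by
  rw [hiso s hs t ht, abs_sub_comm, abs_of_nonneg (sub_nonneg.2 hst)]

theorem concat_bounds_of_dist_eq {p q : X} {T : ℝ} (hlam : 1 ≤ lam) (hε : 0 ≤ ε)
    (hpq : dist p q = T) :
    T ≤ lam * (dist p q + ε) ∧ dist p q ≤ lam * T + ε := by
  subst hpq
  have hT := dist_nonneg (x := p) (y := q)
  constructor <;> nlinarith

theorem concat_bounds_tail_middle {a p c q : X} {T : ℝ} (hlam : 1 ≤ lam)
    (hgeod : dist a p + dist p c ≤ dist a c) (hnear : dist a c ≤ dist a q + ε)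
    (hT : T ≤ lam * (dist c q + ε)) (hcq : dist c q ≤ lam * T + ε) :
    dist p c + T ≤ 3 * lam * (dist p q + ε) ∧ dist p q ≤ lam * (dist p c + T) + ε := by
  have hpc : dist p c ≤ dist p q + ε := by linarith [dist_triangle a p q]
  have hcq' : dist c q ≤ dist p c + dist p q := by linarith [dist_triangle_left c q p]
  have hpc₀ := dist_nonneg (x := p) (y := c)
  constructor
  · nlinarith
  · nlinarith [dist_triangle p c q]

theorem concat_bounds_tail_tail {p c c' q : X} {T : ℝ} (hlam : 1 ≤ lam) (hε : 0 ≤ ε)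
    (hT : T ≤ lam * (dist c c' + ε)) (hcc' : dist c c' ≤ lam * T + ε)
    (hshort : 3 * (dist p c + dist c' q) ≤ 2 * dist c c') :
    dist p c + T + dist c' q ≤ 5 * lam * (dist p q + ε) ∧
      dist p q ≤ lam * (dist p c + T + dist c' q) + ε := by
  have hcc'_le : dist c c' ≤ dist c p + dist p q + dist q c' := dist_triangle4 c p q c'
  rw [dist_comm c p, dist_comm q c'] at hcc'_le
  have hpc₀ := dist_nonneg (x := p) (y := c)
  have hc'q₀ := dist_nonneg (x := c') (y := q)
  constructor
  · nlinarith
  · nlinarith [dist_triangle4 p c c' q]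

theorem IsQuasiGeodesicOn.extend_left (hmid : IsQuasiGeodesicOn lam ε Q (Icc u₁ u₂))
    (hlam : 1 ≤ lam) (hε : 0 ≤ ε) (h₀₁ : u₀ ≤ u₁)
    (hleft : ∀ s ∈ Icc u₀ u₁, ∀ t ∈ Icc u₀ u₁, dist (Q s) (Q t) = |s - t|)
    (hnear : ∀ t ∈ Icc u₁ u₂, dist (Q u₀) (Q u₁) ≤ dist (Q u₀) (Q t) + ε) :
    IsQuasiGeodesicOn (3 * lam) ε Q (Icc u₀ u₂) := by
  have hlam₀ : 0 < lam := by linarith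
  have hmid' := (isQuasiGeodesicOn_iff_forall_le hlam₀).1 hmid
  rw [isQuasiGeodesicOn_iff_forall_le (by linarith)]
  intro s hs t ht hst
  have hd₀ := dist_nonneg (x := Q s) (y := Q t)
  rcases le_total t u₁ with ht₁ | ht₁
  · exact concat_bounds_of_dist_eq (by linarith) hε
      (dist_eq_sub_of_isometric hleft ⟨hs.1, hst.trans ht₁⟩ ⟨hs.1.trans hst, ht₁⟩ hst)
  rcases le_total u₁ s with hs₁ | hs₁
  · obtain ⟨hT, hcq⟩ := hmid' s ⟨hs₁, hs.2⟩ t ⟨ht₁, ht.2⟩ hst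
    constructor <;> nlinarith
  have hsL : s ∈ Icc u₀ u₁ := ⟨hs.1, hs₁⟩
  have hu₀L : u₀ ∈ Icc u₀ u₁ := ⟨le_rfl, h₀₁⟩
  have hu₁L : u₁ ∈ Icc u₀ u₁ := ⟨h₀₁, le_rfl⟩
  have hsu₁ := dist_eq_sub_of_isometric hleft hsL hu₁L hs₁
  have hgeod : dist (Q u₀) (Q s) + dist (Q s) (Q u₁) ≤ dist (Q u₀) (Q u₁) := by
    rw [dist_eq_sub_of_isometric hleft hu₀L hsL hs.1, hsu₁,
      dist_eq_sub_of_isometric hleft hu₀L hu₁L h₀₁]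
    linarith
  obtain ⟨hT, hcq⟩ := hmid' u₁ ⟨le_rfl, ht₁.trans ht.2⟩ t ⟨ht₁, ht.2⟩ ht₁
  obtain ⟨h₁, h₂⟩ := concat_bounds_tail_middle hlam hgeod (hnear t ⟨ht₁, ht.2⟩) hT hcq
  rw [hsu₁] at h₁ h₂
  constructor <;> nlinarith

theorem IsQuasiGeodesicOn.extend_right (hmid : IsQuasiGeodesicOn lam ε Q (Icc u₁ u₂))
    (hlam : 1 ≤ lam) (hε : 0 ≤ ε) (h₂₃ : u₂ ≤ u₃)
    (hright : ∀ s ∈ Icc u₂ u₃, ∀ t ∈ Icc u₂ u₃, dist (Q s) (Q t) = |s - t|)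
    (hnear : ∀ t ∈ Icc u₁ u₂, dist (Q u₃) (Q u₂) ≤ dist (Q u₃) (Q t) + ε) :
    IsQuasiGeodesicOn (3 * lam) ε Q (Icc u₁ u₃) := by
  have hneg := (hmid.comp_neg.extend_left hlam hε (neg_le_neg h₂₃) ?_ ?_).comp_neg
  · simpa only [neg_neg] using hneg
  · intro s hs t ht
    rw [hright (-s) ⟨le_neg.2 hs.2, neg_le.1 hs.1⟩ (-t) ⟨le_neg.2 ht.2, neg_le.1 ht.1⟩,
      neg_sub_neg, abs_sub_comm]
  · intro t ht
    simpa only [neg_neg] using hnear (-t) ⟨le_neg.2 ht.2, neg_le.1 ht.1⟩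

theorem isQuasiGeodesicOn_concat (hlam : 1 ≤ lam) (hε : 0 ≤ ε) (h₀₁ : u₀ ≤ u₁)
    (h₁₂ : u₁ ≤ u₂) (h₂₃ : u₂ ≤ u₃)
    (hleft : ∀ s ∈ Icc u₀ u₁, ∀ t ∈ Icc u₀ u₁, dist (Q s) (Q t) = |s - t|)
    (hright : ∀ s ∈ Icc u₂ u₃, ∀ t ∈ Icc u₂ u₃, dist (Q s) (Q t) = |s - t|)
    (hmid : IsQuasiGeodesicOn lam ε Q (Icc u₁ u₂))
    (hnear₁ : ∀ t ∈ Icc u₁ u₂, dist (Q u₀) (Q u₁) ≤ dist (Q u₀) (Q t) + ε)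
    (hnear₂ : ∀ t ∈ Icc u₁ u₂, dist (Q u₃) (Q u₂) ≤ dist (Q u₃) (Q t) + ε)
    (hlong : 3 * ((u₁ - u₀) + (u₃ - u₂)) ≤ 2 * dist (Q u₁) (Q u₂)) :
    IsQuasiGeodesicOn (5 * lam) ε Q (Icc u₀ u₃) := by
  have h3 : 0 < 3 * lam := by linarith
  have h5 : 3 * lam ≤ 5 * lam := by linarith
  have hL := (isQuasiGeodesicOn_iff_forall_le (h3.trans_le h5)).1
    ((hmid.extend_left hlam hε h₀₁ hleft hnear₁).weaken h3 h5)
  have hR := (isQuasiGeodesicOn_iff_forall_le (h3.trans_le h5)).1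
    ((hmid.extend_right hlam hε h₂₃ hright hnear₂).weaken h3 h5)
  rw [isQuasiGeodesicOn_iff_forall_le (h3.trans_le h5)]
  intro s hs t ht hst
  rcases le_total t u₂ with ht₂ | ht₂
  · exact hL s ⟨hs.1, hst.trans ht₂⟩ t ⟨ht.1, ht₂⟩ hst
  rcases le_total u₁ s with hs₁ | hs₁
  · exact hR s ⟨hs₁, hs.2⟩ t ⟨hs₁.trans hst, ht.2⟩ hst
  have hsu₁ := dist_eq_sub_of_isometric hleft ⟨hs.1, hs₁⟩ ⟨h₀₁, le_rfl⟩ hs₁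
  have hu₂t := dist_eq_sub_of_isometric hright ⟨le_rfl, h₂₃⟩ ⟨ht₂, ht.2⟩ ht₂
  obtain ⟨hT, hcc'⟩ := (isQuasiGeodesicOn_iff_forall_le (by linarith : (0 : ℝ) < lam)).1 hmid
    u₁ ⟨le_rfl, h₁₂⟩ u₂ ⟨h₁₂, le_rfl⟩ h₁₂
  obtain ⟨h₁, h₂⟩ := concat_bounds_tail_tail hlam hε hT hcc'
    (by rw [hsu₁, hu₂t]; linarith [hs.1, ht.2])
  rw [hsu₁, hu₂t] at h₁ h₂
  constructor <;> nlinarith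

end Concatenation

theorem GeodesicSpace.exists_extension (hX : GeodesicSpace X) (γ : ℝ → X) {τ₁ τ₂ : ℝ}
    (hτ : τ₁ ≤ τ₂) (a a' : X) :
    ∃ Q : ℝ → X, Q (τ₁ - dist a (γ τ₁)) = a ∧ Q (τ₂ + dist a' (γ τ₂)) = a' ∧
      EqOn Q γ (Icc τ₁ τ₂) ∧
      (∀ s ∈ Icc (τ₁ - dist a (γ τ₁)) τ₁, ∀ t ∈ Icc (τ₁ - dist a (γ τ₁)) τ₁,
        dist (Q s) (Q t) = |s - t|) ∧
      (∀ s ∈ Icc τ₂ (τ₂ + dist a' (γ τ₂)), ∀ t ∈ Icc τ₂ (τ₂ + dist a' (γ τ₂)),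
        dist (Q s) (Q t) = |s - t|) := by
  obtain ⟨α, hα₀, hα₁, hα⟩ := hX a (γ τ₁)
  obtain ⟨β, hβ₀, hβ₁, hβ⟩ := hX a' (γ τ₂)
  set ℓ₁ := dist a (γ τ₁)
  set ℓ₂ := dist a' (γ τ₂)
  set R := (Iic τ₂).piecewise γ (fun s => β (τ₂ + ℓ₂ - s))
  have hRγ : EqOn R γ (Iic τ₂) := piecewise_eqOn _ _ _
  have hRβ : EqOn R (fun s => β (τ₂ + ℓ₂ - s)) (Ici τ₂) :=
    eqOn_piecewise_Iic_of_eq (by simp only [add_sub_cancel_left, hβ₁])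
  have hQα : EqOn ((Iic τ₁).piecewise (fun s => α (s - (τ₁ - ℓ₁))) R)
      (fun s => α (s - (τ₁ - ℓ₁))) (Iic τ₁) := piecewise_eqOn _ _ _
  have hQR : EqOn ((Iic τ₁).piecewise (fun s => α (s - (τ₁ - ℓ₁))) R) R (Ici τ₁) :=
    eqOn_piecewise_Iic_of_eq (by simp only [sub_sub_cancel, hα₁, hRγ (mem_Iic.2 hτ)])
  have hℓ₁ : 0 ≤ ℓ₁ := dist_nonneg
  have hℓ₂ : 0 ≤ ℓ₂ := dist_nonneg
  refine ⟨(Iic τ₁).piecewise (fun s => α (s - (τ₁ - ℓ₁))) R, ?_, ?_, ?_, ?_, ?_⟩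
  · rw [hQα (mem_Iic.2 (by linarith))]
    simp only [sub_self, hα₀]
  · rw [hQR (mem_Ici.2 (by linarith)), hRβ (mem_Ici.2 (by linarith))]
    simp only [sub_self, hβ₀]
  · exact fun s hs => (hQR (mem_Ici.2 hs.1)).trans (hRγ (mem_Iic.2 hs.2))
  · intro s hs t ht
    rw [hQα (mem_Iic.2 hs.2), hQα (mem_Iic.2 ht.2),
      hα _ ⟨by linarith [hs.1], by linarith [hs.2]⟩ _ ⟨by linarith [ht.1], by linarith [ht.2]⟩,
      sub_sub_sub_cancel_right]
  · intro s hs t ht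
    rw [hQR (mem_Ici.2 (hτ.trans hs.1)), hQR (mem_Ici.2 (hτ.trans ht.1)), hRβ hs.1, hRβ ht.1,
      hβ _ ⟨by linarith [hs.2], by linarith [hs.1]⟩ _ ⟨by linarith [ht.2], by linarith [ht.1]⟩,
      sub_sub_sub_cancel_left, abs_sub_comm]

theorem IsMorseWith.infDist_le_of_isQuasiGeodesicOn {M : ℝ → ℝ → ℝ} {A : Set X}
    (hA : IsMorseWith M A) (hX : GeodesicSpace X) {lam ε τ₁ τ₂ : ℝ} {γ : ℝ → X}
    (hγ : IsQuasiGeodesicOn lam ε γ (Icc τ₁ τ₂)) (hlam : 1 ≤ lam) (hε : 0 ≤ ε) (hτ : τ₁ ≤ τ₂)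
    {a a' : X} (ha : a ∈ A) (ha' : a' ∈ A)
    (hnear₁ : ∀ t ∈ Icc τ₁ τ₂, dist a (γ τ₁) ≤ dist a (γ t) + ε)
    (hnear₂ : ∀ t ∈ Icc τ₁ τ₂, dist a' (γ τ₂) ≤ dist a' (γ t) + ε)
    (hlong : 3 * (dist a (γ τ₁) + dist a' (γ τ₂)) ≤ 2 * dist (γ τ₁) (γ τ₂)) :
    ∀ t ∈ Icc τ₁ τ₂, infDist (γ t) A ≤ M (5 * lam) ε := by
  obtain ⟨Q, hQa, hQa', hQγ, hleft, hright⟩ := hX.exists_extension γ hτ a a'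
  have hℓ₁ := dist_nonneg (x := a) (y := γ τ₁)
  have hℓ₂ := dist_nonneg (x := a') (y := γ τ₂)
  have hτ₁ : τ₁ ∈ Icc τ₁ τ₂ := ⟨le_rfl, hτ⟩
  have hτ₂ : τ₂ ∈ Icc τ₁ τ₂ := ⟨hτ, le_rfl⟩
  have hQ : IsQuasiGeodesicOn (5 * lam) ε Q
      (Icc (τ₁ - dist a (γ τ₁)) (τ₂ + dist a' (γ τ₂))) :=
    isQuasiGeodesicOn_concat hlam hε (by linarith) hτ (by linarith) hleft hright
      (hγ.congr hQγ) (fun t ht => by rw [hQa, hQγ hτ₁, hQγ ht]; exact hnear₁ t ht)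
      (fun t ht => by rw [hQa', hQγ hτ₂, hQγ ht]; exact hnear₂ t ht)
      (by rw [hQγ hτ₁, hQγ hτ₂]; linarith)
  intro t ht
  rw [← hQγ ht]
  exact hA (5 * lam) ε (by linarith) hε _ _ Q (by linarith) hQ (by rwa [hQa]) (by rwa [hQa']) t
    ⟨by linarith [ht.1], by linarith [ht.2]⟩

theorem IsMorseWith.exists_close_points_of_far_endpoints {M : ℝ → ℝ → ℝ} {A : Set X} (hA : IsMorseWith M A)
    (hX : GeodesicSpace X) {lam ε s₀ s₁ ρ : ℝ} {γ : ℝ → X}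
    (hγ : IsQuasiGeodesicOn lam ε γ (Icc s₀ s₁)) (hlam : 1 ≤ lam) (hε : 0 ≤ ε) (hs : s₀ ≤ s₁)
    {a a' : X} (ha : a ∈ A) (ha' : a' ∈ A) (h₀ : dist a (γ s₀) ≤ ρ) (h₁ : dist a' (γ s₁) ≤ ρ)
    (hfar : 7 * ρ + 5 * ε ≤ dist (γ s₀) (γ s₁)) :
    ∃ τ₁ ∈ Icc s₀ s₁, ∃ τ₂ ∈ Icc s₀ s₁, infDist (γ τ₁) A ≤ M (5 * lam) ε ∧
      infDist (γ τ₂) A ≤ M (5 * lam) ε ∧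
      dist (γ s₀) (γ s₁) ≤ dist (γ τ₁) (γ τ₂) + 4 * ρ + 2 * ε := by
  have hlam₀ : 0 < lam := by linarith
  obtain ⟨τ₁, hτ₁, hclose₁, hnear₁⟩ := hγ.exists_last_exit hlam₀ hε hs h₀
  obtain ⟨τ₂, hτ₂, hclose₂, hnear₂⟩ :=
    (hγ.mono (Icc_subset_Icc_left hτ₁.1)).exists_first_entry hlam₀ hε hτ₁.2 h₁
  have hends : dist (γ s₀) (γ s₁) ≤ dist (γ τ₁) (γ τ₂) + 4 * ρ + 2 * ε := by
    linarith [dist_triangle4 (γ s₀) (γ τ₁) (γ τ₂) (γ s₁), dist_triangle_left (γ s₀) (γ τ₁) a,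
      dist_triangle_left (γ τ₂) (γ s₁) a']
  have hmorse := hA.infDist_le_of_isQuasiGeodesicOn hX (hγ.mono (Icc_subset_Icc hτ₁.1 hτ₂.2))
    hlam hε hτ₂.1 ha ha' (fun t ht => hnear₁ t ⟨ht.1, ht.2.trans hτ₂.2⟩) hnear₂ (by linarith)
  exact ⟨τ₁, hτ₁, τ₂, ⟨hτ₁.1.trans hτ₂.1, hτ₂.2⟩, hmorse τ₁ ⟨le_rfl, hτ₂.1⟩,
    hmorse τ₂ ⟨hτ₂.1, le_rfl⟩, hends⟩

theorem exists_mem_cthickening_inter_of_infDist_le {A B : Set X} {z : X} {m σ : ℝ}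
    (hA : A.Nonempty) (hB : B.Nonempty) (hzA : infDist z A ≤ m)
    (hzB : infDist z B ≤ σ) :
    ∃ p ∈ cthickening (m + σ + 2) A ∩ B, dist z p < σ + 1 := by
  obtain ⟨p, hpB, hzp⟩ := (infDist_lt_iff hB).1 (hzB.trans_lt (lt_add_one σ))
  obtain ⟨a, haA, hza⟩ := (infDist_lt_iff hA).1 (hzA.trans_lt (lt_add_one m))
  exact ⟨p, ⟨mem_cthickening_of_dist_le p a _ A haA
    (by linarith [dist_triangle_left p a z]), hpB⟩, hzp⟩

theorem HasBoundedPenetrationWith.dist_le_of_infDist_le {f : ℝ → ℝ} {A : Set X}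
    {𝓑 : Set (Set X)} (h : HasBoundedPenetrationWith f A 𝓑) {B : Set X} (hB : B ∈ 𝓑)
    (hA : A.Nonempty) (hBne : B.Nonempty) {z₁ z₂ : X} {m σ : ℝ}
    (h₁A : infDist z₁ A ≤ m) (h₂A : infDist z₂ A ≤ m)
    (h₁B : infDist z₁ B ≤ σ) (h₂B : infDist z₂ B ≤ σ) :
    dist z₁ z₂ ≤ 2 * σ + 2 + max (f (m + σ + 2)) 0 := by
  obtain ⟨p₁, hp₁, hzp₁⟩ := exists_mem_cthickening_inter_of_infDist_le hA hBne h₁A h₁B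
  obtain ⟨p₂, hp₂, hzp₂⟩ := exists_mem_cthickening_inter_of_infDist_le hA hBne h₂A h₂B
  have hR : 0 ≤ m + σ + 2 := by
    linarith [infDist_nonneg (x := z₁) (s := A), infDist_nonneg (x := z₁) (s := B)]
  have hp : edist p₁ p₂ ≤ ENNReal.ofReal (max (f (m + σ + 2)) 0) :=
    ((edist_le_ediam_of_mem hp₁ hp₂).trans (h B hB _ hR)).trans
      (ENNReal.ofReal_le_ofReal (le_max_left _ _))
  rw [edist_dist, ENNReal.ofReal_le_ofReal_iff (le_max_right _ _)] at hp
  linarith [dist_triangle4 z₁ p₁ p₂ z₂, dist_comm p₂ z₂]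

/-- For all `λ ≥ 1`, `ε ≥ 0`, `σ ≥ 0`, every Morse gauge `M` and every `f : [0,∞) → [0,∞)`,
there is `b = b(λ, ε, σ, M, f)` such that: if `A` is an `M`-Morse subset of a geodesic space
`X` and `A` has `f`-bounded penetration with respect to a collection `𝓑` of
`(λ, ε, σ)`-quasiconvex subsets of `X`, then `diam (N_r(A) ∩ B) ≤ 7r + b` for every `B ∈ 𝓑`
and `r > 0`. -/
theorem morse_bounded_penetration_diam_bound
    (lam ε σ : ℝ) (hlam : 1 ≤ lam) (hε : 0 ≤ ε) (hσ : 0 ≤ σ)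
    (M : ℝ → ℝ → ℝ) (f : ℝ → ℝ) :
    ∃ b : ℝ,
      ∀ (X : Type) (_ : MetricSpace X), GeodesicSpace X →
      ∀ A : Set X, IsMorseWith M A →
      ∀ 𝓑 : Set (Set X), (∀ B ∈ 𝓑, IsQuasiconvexWith lam ε σ B) →
        HasBoundedPenetrationWith f A 𝓑 →
        ∀ B ∈ 𝓑, ∀ r : ℝ, 0 < r →
          EMetric.diam (Metric.cthickening r A ∩ B) ≤ ENNReal.ofReal (7 * r + b) := by
  refine ⟨7 + 5 * ε + 2 * σ + max (f (M (5 * lam) ε + σ + 2)) 0, ?_⟩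
  intro X _ hX A hA 𝓑 hQC hBP B hB r hr
  refine ediam_le_of_forall_dist_le fun x hx y hy => ?_
  have hpen := le_max_right (f (M (5 * lam) ε + σ + 2)) 0
  by_cases hxy : dist x y ≤ 7 * (r + 1) + 5 * ε
  · linarith
  have hnear : ∀ z ∈ cthickening r A, ∃ a ∈ A, dist a z ≤ r + 1 := fun z hz => by
    obtain ⟨a, ha, hza⟩ := mem_thickening_iff.1
      (cthickening_subset_thickening' (by linarith) (lt_add_one r) A hz)
    exact ⟨a, ha, by rw [dist_comm]; exact hza.le⟩
  obtain ⟨a, ha, hxa⟩ := hnear x hx.1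
  obtain ⟨a', ha', hya'⟩ := hnear y hy.1
  obtain ⟨s₀, s₁, γ, hs, rfl, rfl, hγ, hγB⟩ := hQC B hB _ hx.2 _ hy.2
  obtain ⟨τ₁, hτ₁, τ₂, hτ₂, hM₁, hM₂, hends⟩ :=
    hA.exists_close_points_of_far_endpoints hX hγ hlam hε hs ha ha' hxa hya' (by linarith)
  linarith [hBP.dist_le_of_infDist_le hB ⟨a, ha⟩ ⟨_, hx.2⟩ hM₁ hM₂ (hγB τ₁ hτ₁) (hγB τ₂ hτ₂)]
end

section
/- Let G1 be a group with finite generating set S, let H1, H2 be subgroups of G1 with an isomorphism φ : H1 → H2, let S_H be a finite generating set of H1, and assume S_H ∪ φ(S_H) ⊆ S. Let G = ⟨G1, t | t⁻¹ht = φ(h) for all h ∈ H1⟩ be the HNN extension of G1 along φ with stable letter t, identify G1 with its image in G, and let T = S ∪ {t}, a finite generating set of G. Suppose there is a positive integer M such that |h|_{S_H} ≤ M·|h|_T for every h ∈ H1 and |k|_{φ(S_H)} ≤ M·|k|_T for every k ∈ H2. Then |g|_S ≤ M·|g|_T for every g ∈ G1; in particular G1 is undistorted in G. -/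
/-- The word length of `g` with respect to a (symmetrized) generating set `S`. -/
noncomputable def wordLength {G : Type*} [Group G] (S : Set G) (g : G) : ℕ :=
  sInf {n | ∃ l : List G, l.length = n ∧ (∀ x ∈ l, x ∈ S ∨ x⁻¹ ∈ S) ∧ l.prod = g}

/-!
Write `of g` as a geodesic word in `T` and cut it at the stable letters into an alternating word
`x₀ t^{u₁} x₁ ⋯ t^{uₙ} xₙ` with `xᵢ ∈ G₁`. Each `xᵢ` carries a budget `nᵢ` with
`|xᵢ|_T ≤ nᵢ` and `|xᵢ|_S ≤ M nᵢ`, and the budgets plus the number of stable letters add up to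
`|g|_T`. By Britton's lemma, as long as a stable letter is left there is a pinch
`t^u x t^{-u}` with `x` in the associated subgroup; it equals the base element `φ^{±1}(x)`,
whose `T`-length is at most the budget of `x` plus `2`, and by the distortion hypothesis on
`H₁`, `H₂` its `S`-length is at most `M` times that. Merging it with its neighbours keeps the
invariant, and when no stable letter is left the word is `g` itself.
-/

section WordLength

variable {G : Type*} [Group G] {S : Set G}

theorem exists_list_length_eq_wordLength {g : G} (hg : g ∈ Subgroup.closure S) :
    ∃ l : List G, l.length = wordLength S g ∧ (∀ x ∈ l, x ∈ S ∨ x⁻¹ ∈ S) ∧ l.prod = g := by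
  rw [← Subgroup.mem_toSubmonoid, Subgroup.closure_toSubmonoid] at hg
  obtain ⟨l, hl, rfl⟩ := Submonoid.exists_list_of_mem_closure hg
  exact Nat.sInf_mem (s := {n | ∃ l' : List G, l'.length = n ∧ (∀ x ∈ l', x ∈ S ∨ x⁻¹ ∈ S) ∧
    l'.prod = l.prod}) ⟨l.length, l, rfl, hl, rfl⟩

theorem wordLength_prod_le {l : List G} (hl : ∀ x ∈ l, x ∈ S ∨ x⁻¹ ∈ S) :
    wordLength S l.prod ≤ l.length :=
  Nat.sInf_le ⟨l, rfl, hl, rfl⟩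

theorem wordLength_one : wordLength S (1 : G) = 0 :=
  Nat.le_zero.mp (wordLength_prod_le (l := []) (by simp))

theorem wordLength_le_one {x : G} (hx : x ∈ S ∨ x⁻¹ ∈ S) : wordLength S x ≤ 1 := by
  simpa using wordLength_prod_le (S := S) (l := [x]) (by simpa using hx)

theorem wordLength_mul_le {a b : G} (ha : a ∈ Subgroup.closure S)
    (hb : b ∈ Subgroup.closure S) : wordLength S (a * b) ≤ wordLength S a + wordLength S b := by
  obtain ⟨la, hla, hSa, rfl⟩ := exists_list_length_eq_wordLength ha
  obtain ⟨lb, hlb, hSb, rfl⟩ := exists_list_length_eq_wordLength hb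
  rw [← hla, ← hlb, ← List.length_append, ← List.prod_append]
  exact wordLength_prod_le fun x hx => (List.mem_append.mp hx).elim (hSa x) (hSb x)

theorem wordLength_map_le {H : Type*} [Group H] {SH : Set H} (f : H →* G) (hf : f '' SH ⊆ S)
    {h : H} (hh : h ∈ Subgroup.closure SH) : wordLength S (f h) ≤ wordLength SH h := by
  obtain ⟨l, hl, hSl, rfl⟩ := exists_list_length_eq_wordLength hh
  rw [← hl, map_list_prod, ← List.length_map f]
  refine wordLength_prod_le fun y hy => ?_
  obtain ⟨x, hx, rfl⟩ := List.mem_map.mp hy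
  rcases hSl x hx with h | h
  · exact Or.inl (hf ⟨x, h, rfl⟩)
  · exact Or.inr (map_inv f x ▸ hf ⟨x⁻¹, h, rfl⟩)

end WordLength

theorem MonoidHom.apply_mem_closure_of_closure_eq_top {G H : Type*} [Group G] [Group H]
    (f : G →* H) {S : Set G} {T : Set H} (hS : Subgroup.closure S = ⊤) (hST : f '' S ⊆ T)
    (x : G) : f x ∈ Subgroup.closure T := by
  have hx : f x ∈ (Subgroup.closure S).map f := ⟨x, hS ▸ Subgroup.mem_top x, rfl⟩
  rw [MonoidHom.map_closure] at hx
  exact Subgroup.closure_mono hST hx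

namespace HNNExtension

/-- The word `x₀ t^{u₁} x₁ ⋯ t^{uₙ} xₙ`: base-group elements alternating with `t` or `t⁻¹`. -/
inductive AltWord (G : Type*)
  | last (x : G)
  | cons (x : G) (u : ℤˣ) (w : AltWord G)

variable {G : Type*} [Group G] {A B : Subgroup G} {φ : A ≃* B}

theorem t_zpow_mul_of_mul_t_zpow_neg (u : ℤˣ) (a : toSubgroup A B u) :
    t ^ (u : ℤ) * of (a : G) * t ^ (-(u : ℤ)) =
      (of (toSubgroupEquiv φ u a : G) : HNNExtension G A B φ) := by
  rcases Int.units_eq_one_or u with rfl | rfl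
  · simp only [Units.val_one, zpow_one, zpow_neg]
    exact (equiv_eq_conj a).symm
  · simp only [Units.val_neg, Units.val_one, zpow_neg, zpow_one, neg_neg]
    exact (equiv_symm_eq_conj a).symm

/-- `P x n` reads "`x` fits into the budget `n`": budgets add under multiplication, and
conjugating an element of an associated subgroup by a stable letter costs `2`. -/
structure CostBound (φ : A ≃* B) (P : G → ℕ → Prop) : Prop where
  one : P 1 0
  mul {a b : G} {m n : ℕ} : P a m → P b n → P (a * b) (m + n)
  conj {u : ℤˣ} {a : toSubgroup A B u} {n : ℕ} : P a n → P (toSubgroupEquiv φ u a) (n + 2)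

namespace AltWord

def prod (φ : A ≃* B) : AltWord G → HNNExtension G A B φ
  | last x => of x
  | cons x u w => of x * t ^ (u : ℤ) * w.prod φ

def numStable : AltWord G → ℕ
  | last _ => 0
  | cons _ _ w => w.numStable + 1

def head : AltWord G → G
  | last x => x
  | cons x _ _ => x

/-- The syllables `(uᵢ, xᵢ)` of `Mathlib`'s `ReducedWord`, standing for `t^{uᵢ} xᵢ`. -/
def syllables : AltWord G → List (ℤˣ × G)
  | last _ => []
  | cons _ u w => (u, w.head) :: w.syllables

def mulHead (a : G) : AltWord G → AltWord G
  | last x => last (a * x)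
  | cons x u w => cons (a * x) u w

def Bounded (P : G → ℕ → Prop) : AltWord G → ℕ → Prop
  | last x, n => P x n
  | cons x _ w, n => ∃ m k, P x m ∧ w.Bounded P k ∧ n = m + 1 + k

variable (A B) in
def IsReduced (w : AltWord G) : Prop :=
  w.syllables.IsChain fun a b => a.2 ∈ toSubgroup A B a.1 → a.1 = b.1

@[simp]
theorem numStable_mulHead (a : G) (w : AltWord G) : (w.mulHead a).numStable = w.numStable := by
  cases w <;> rfl

@[simp]
theorem prod_mulHead (a : G) (w : AltWord G) : (w.mulHead a).prod φ = of a * w.prod φ := by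
  cases w <;> simp [mulHead, prod, mul_assoc]

theorem Bounded.mulHead {P : G → ℕ → Prop} (hP : CostBound φ P) {a : G} {m n : ℕ}
    (ha : P a m) : ∀ {w : AltWord G}, w.Bounded P n → (w.mulHead a).Bounded P (m + n)
  | last _, hw => hP.mul ha hw
  | cons _ _ _, ⟨m', k, hx, hw, hn⟩ => ⟨m + m', k, hP.mul ha hx, hw, by omega⟩

theorem of_head_mul_prod_syllables (w : AltWord G) :
    of w.head * (w.syllables.map fun p => t ^ (p.1 : ℤ) * of p.2).prod = w.prod φ := by
  induction w with
  | last x => simp [head, syllables, prod]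
  | cons x u w ih => simp [head, syllables, prod, ← ih, mul_assoc]

theorem IsReduced.exists_eq_last {w : AltWord G} (hw : w.IsReduced A B)
    (h : w.prod φ ∈ (of : G →* HNNExtension G A B φ).range) : ∃ x, w = last x := by
  have hnil := ReducedWord.toList_eq_nil_of_mem_of_range φ ⟨w.head, w.syllables, hw⟩
    (by rwa [NormalWord.ReducedWord.prod, of_head_mul_prod_syllables])
  cases w with
  | last x => exact ⟨x, rfl⟩
  | cons x u w => simp [syllables] at hnil

theorem exists_numStable_lt_of_not_isReduced {P : G → ℕ → Prop} (hP : CostBound φ P) :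
    ∀ {w : AltWord G} {n : ℕ}, ¬ w.IsReduced A B → w.Bounded P n →
      ∃ w' : AltWord G, w'.numStable < w.numStable ∧ w'.prod φ = w.prod φ ∧ w'.Bounded P n
  | last _, _, hred, _ => absurd List.isChain_nil hred
  | cons _ _ (last _), _, hred, _ => absurd (List.isChain_singleton _) hred
  | cons x u (cons y v w), n, hred, hb => by
    obtain ⟨m, k, hx, hyw, rfl⟩ := hb
    rw [IsReduced, syllables, syllables, List.isChain_cons_cons] at hred
    by_cases hpinch : y ∈ toSubgroup A B u ∧ u ≠ v
    · obtain ⟨hy, huv⟩ := hpinch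
      obtain rfl : v = -u := by
        rcases Int.units_eq_one_or u with rfl | rfl <;>
          rcases Int.units_eq_one_or v with rfl | rfl <;> simp_all
      obtain ⟨k₁, k₂, hy', hw, rfl⟩ := hyw
      -- `t^u y t^{-u}` is the base element `φ^{±1}(y)`
      set p := (toSubgroupEquiv φ u ⟨y, hy⟩ : G)
      refine ⟨w.mulHead (x * p), by simp [numStable], ?_, ?_⟩
      · simp only [prod_mulHead, prod, map_mul, p, ← t_zpow_mul_of_mul_t_zpow_neg, Units.val_neg,
          mul_assoc]
      · convert hw.mulHead hP (hP.mul hx (hP.conj (a := ⟨y, hy⟩) hy')) using 1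
        omega
    · have hred' : ¬ (cons y v w).IsReduced A B := by
        rw [IsReduced, syllables]
        tauto
      obtain ⟨w', hlt, hprod, hw'⟩ := exists_numStable_lt_of_not_isReduced hP hred' hyw
      exact ⟨cons x u w', by simpa [numStable] using hlt, by simp only [prod, hprod],
        ⟨m, k, hx, hw', rfl⟩⟩

theorem Bounded.apply_of_prod_eq_of {P : G → ℕ → Prop} (hP : CostBound φ P) {w : AltWord G}
    {n : ℕ} (hw : w.Bounded P n) {g : G} (h : w.prod φ = of g) : P g n := by
  induction hN : w.numStable using Nat.strong_induction_on generalizing w with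
  | _ N ih =>
    by_cases hred : w.IsReduced A B
    · obtain ⟨x, rfl⟩ := hred.exists_eq_last ⟨g, h.symm⟩
      rwa [← of_injective φ h]
    · obtain ⟨w', hlt, hprod, hw'⟩ := exists_numStable_lt_of_not_isReduced hP hred hw
      exact ih _ (hN ▸ hlt) hw' (hprod.trans h) rfl

theorem exists_bounded_prod_eq {P : G → ℕ → Prop} (hP : CostBound φ P) :
    ∀ {l : List (HNNExtension G A B φ)}, (∀ y ∈ l, y = t ∨ y = t⁻¹ ∨ ∃ x, P x 1 ∧ of x = y) →
      ∃ w : AltWord G, w.Bounded P l.length ∧ w.prod φ = l.prod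
  | [], _ => ⟨last 1, hP.one, by simp [prod]⟩
  | y :: l, hl => by
    obtain ⟨w, hw, hprod⟩ :=
      exists_bounded_prod_eq hP fun z hz => hl z (List.mem_cons_of_mem y hz)
    have stable (u : ℤˣ) : (cons 1 u w).Bounded P (l.length + 1) ∧
        (cons 1 u w).prod φ = t ^ (u : ℤ) * l.prod :=
      ⟨⟨0, l.length, hP.one, hw, by omega⟩, by simp [prod, hprod]⟩
    rcases hl y List.mem_cons_self with rfl | rfl | ⟨x, hx, rfl⟩
    · exact ⟨_, by simpa using stable 1⟩
    · exact ⟨_, by simpa using stable (-1)⟩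
    · exact ⟨w.mulHead x, by simpa [add_comm] using hw.mulHead hP hx, by simp [hprod]⟩

end AltWord

theorem CostBound.apply_of_list_prod_eq {P : G → ℕ → Prop} (hP : CostBound φ P)
    {l : List (HNNExtension G A B φ)} (hl : ∀ y ∈ l, y = t ∨ y = t⁻¹ ∨ ∃ x, P x 1 ∧ of x = y)
    {g : G} (h : l.prod = of g) : P g l.length := by
  obtain ⟨w, hw, hprod⟩ := AltWord.exists_bounded_prod_eq hP hl
  exact hw.apply_of_prod_eq_of hP (hprod.trans h)

end HNNExtension

open HNNExtension

section Undistorted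

variable {G1 : Type*} [Group G1] {H1 H2 : Subgroup G1} {φ : H1 ≃* H2}

def LengthsLE (S : Set G1) (T : Set (HNNExtension G1 H1 H2 φ)) (M : ℕ) (x : G1) (n : ℕ) :
    Prop :=
  wordLength T (of x) ≤ n ∧ wordLength S x ≤ M * n

theorem wordLength_t_zpow_le {T : Set (HNNExtension G1 H1 H2 φ)} (ht : t ∈ T) (u : ℤˣ) :
    wordLength T (t ^ (u : ℤ)) ≤ 1 := by
  rcases Int.units_eq_one_or u with rfl | rfl
  · simpa using wordLength_le_one (Or.inl ht)
  · simpa using wordLength_le_one (S := T) (x := t⁻¹) (Or.inr (by simpa using ht))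

theorem costBound_lengthsLE {S : Set G1} {T : Set (HNNExtension G1 H1 H2 φ)} {M : ℕ}
    (hS : Subgroup.closure S = ⊤) (hST : of '' S ⊆ T) (ht : t ∈ T)
    (hH1 : ∀ a : H1, wordLength S (a : G1) ≤ M * wordLength T (of (a : G1)))
    (hH2 : ∀ b : H2, wordLength S (b : G1) ≤ M * wordLength T (of (b : G1))) :
    CostBound φ (LengthsLE S T M) := by
  have hmemS (x : G1) : x ∈ Subgroup.closure S := hS ▸ Subgroup.mem_top x
  have hmemT (x : G1) := of.apply_mem_closure_of_closure_eq_top hS hST x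
  have htT (u : ℤˣ) : (t ^ (u : ℤ) : HNNExtension G1 H1 H2 φ) ∈ Subgroup.closure T :=
    zpow_mem (Subgroup.subset_closure ht) _
  have hH (u : ℤˣ) (b : toSubgroup H1 H2 u) :
      wordLength S (b : G1) ≤ M * wordLength T (of (b : G1)) := by
    rcases Int.units_eq_one_or u with rfl | rfl
    exacts [hH1 b, hH2 b]
  refine ⟨by simp [LengthsLE, wordLength_one], fun ha hb => ⟨?_, ?_⟩, fun {u a n} ha => ?_⟩
  · rw [map_mul]
    exact (wordLength_mul_le (hmemT _) (hmemT _)).trans (add_le_add ha.1 hb.1)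
  · rw [mul_add]
    exact (wordLength_mul_le (hmemS _) (hmemS _)).trans (add_le_add ha.2 hb.2)
  have hconjT : wordLength T (of (toSubgroupEquiv φ u a : G1)) ≤ n + 2 := by
    rw [← t_zpow_mul_of_mul_t_zpow_neg]
    have hneg : wordLength T (t ^ (-(u : ℤ))) ≤ 1 := by
      simpa using wordLength_t_zpow_le ht (-u)
    have htneg : (t ^ (-(u : ℤ)) : HNNExtension G1 H1 H2 φ) ∈ Subgroup.closure T := by
      simpa using htT (-u)
    have hprod := wordLength_mul_le (mul_mem (htT u) (hmemT a)) htneg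
    have hprod' := wordLength_mul_le (htT u) (hmemT a)
    have hpos := wordLength_t_zpow_le ht u
    have := ha.1
    omega
  exact ⟨hconjT, (hH _ _).trans (Nat.mul_le_mul_left M hconjT)⟩

theorem lengthsLE_of_mem {S : Set G1} {T : Set (HNNExtension G1 H1 H2 φ)} {M : ℕ} (hM : 0 < M)
    (hST : of '' S ⊆ T) {x : G1} (hx : x ∈ S ∨ x⁻¹ ∈ S) : LengthsLE S T M x 1 :=
  ⟨wordLength_le_one (hx.imp (fun h => hST ⟨x, h, rfl⟩) fun h => map_inv of x ▸ hST ⟨_, h, rfl⟩),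
    (wordLength_le_one hx).trans (by rw [mul_one]; exact hM)⟩

theorem eq_t_or_eq_t_inv_or_lengthsLE {S : Set G1} {T : Set (HNNExtension G1 H1 H2 φ)} {M : ℕ}
    (hM : 0 < M) (hT : T = of '' S ∪ {t}) {y : HNNExtension G1 H1 H2 φ} (hy : y ∈ T ∨ y⁻¹ ∈ T) :
    y = t ∨ y = t⁻¹ ∨ ∃ x, LengthsLE S T M x 1 ∧ of x = y := by
  have hST : of '' S ⊆ T := hT ▸ Set.subset_union_left
  rcases hT ▸ hy with (⟨x, hx, rfl⟩ | rfl) | (⟨x, hx, hxy⟩ | hy)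
  · exact .inr (.inr ⟨x, lengthsLE_of_mem hM hST (.inl hx), rfl⟩)
  · exact .inl rfl
  · refine .inr (.inr ⟨x⁻¹, lengthsLE_of_mem hM hST (.inr (by simpa using hx)), ?_⟩)
    rw [map_inv, hxy, inv_inv]
  · exact .inr (.inl (inv_eq_iff_eq_inv.mp hy))

end Undistorted

theorem hnn_base_group_undistorted_general
    {G1 : Type*} [Group G1]
    (S : Set G1) (hSgen : Subgroup.closure S = ⊤)
    (H1 H2 : Subgroup G1) (φ : H1 ≃* H2)
    (SH : Set H1) (hSHgen : Subgroup.closure SH = ⊤)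
    (hsub : (Subtype.val '' SH) ∪ (Subtype.val '' ((fun h => φ h) '' SH)) ⊆ S)
    (T : Set (HNNExtension G1 H1 H2 φ))
    (hT : T = (HNNExtension.of '' S) ∪ {HNNExtension.t})
    (M : ℕ) (hM : 0 < M)
    (hH : ∀ h : H1, wordLength SH h ≤ M * wordLength T (HNNExtension.of (h : G1)))
    (hK : ∀ k : H2,
      wordLength ((fun h => φ h) '' SH) k ≤ M * wordLength T (HNNExtension.of (k : G1))) :
    (∀ g : G1, wordLength S g ≤ M * wordLength T (HNNExtension.of g)) ∧
    ∃ M' : ℕ, ∀ g : G1,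
      wordLength S g ≤ M' * wordLength T (HNNExtension.of g) + M' := by
  have hST : of '' S ⊆ T := hT ▸ Set.subset_union_left
  have ht : (t : HNNExtension G1 H1 H2 φ) ∈ T := hT ▸ Or.inr rfl
  have hφSH : Subgroup.closure ((fun h => φ h) '' SH) = ⊤ := by
    rw [show (fun h => φ h) '' SH = φ.toMonoidHom '' SH from rfl, ← MonoidHom.map_closure,
      hSHgen]
    exact Subgroup.map_top_of_surjective _ φ.surjective
  have hH1 (a : H1) : wordLength S (a : G1) ≤ M * wordLength T (of (a : G1)) :=
    (wordLength_map_le H1.subtype (Set.subset_union_left.trans hsub)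
      (hSHgen ▸ Subgroup.mem_top a)).trans (hH a)
  have hH2 (b : H2) : wordLength S (b : G1) ≤ M * wordLength T (of (b : G1)) :=
    (wordLength_map_le H2.subtype (Set.subset_union_right.trans hsub)
      (hφSH ▸ Subgroup.mem_top b)).trans (hK b)
  have hP := costBound_lengthsLE hSgen hST ht hH1 hH2
  have hbase (g : G1) : wordLength S g ≤ M * wordLength T (of g) := by
    obtain ⟨l, hlen, hl, hprod⟩ :=
      exists_list_length_eq_wordLength (of.apply_mem_closure_of_closure_eq_top hSgen hST g)
    rw [← hlen]
    exact (hP.apply_of_list_prod_eq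
      (fun y hy => eq_t_or_eq_t_inv_or_lengthsLE hM hT (hl y hy)) hprod).2
  exact ⟨hbase, M, fun g => (hbase g).trans (Nat.le_add_right _ _)⟩

/-- Let `G₁` be a group with finite generating set `S`, let `φ : H₁ ≃* H₂` be an isomorphism of
subgroups of `G₁`, let `S_H` be a finite generating set of `H₁` with `S_H ∪ φ(S_H) ⊆ S`, and let
`G = HNNExtension G₁ H₁ H₂ φ` with finite generating set `T = of(S) ∪ {t}`. If there is a
positive integer `M` with `|h|_{S_H} ≤ M |h|_T` for every `h ∈ H₁` and
`|k|_{φ(S_H)} ≤ M |k|_T` for every `k ∈ H₂`, then `|g|_S ≤ M |g|_T` for every `g ∈ G₁`;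
in particular `G₁` is undistorted in `G`. -/
theorem hnn_base_group_undistorted
    {G1 : Type*} [Group G1]
    (S : Set G1) (hSfin : S.Finite) (hSgen : Subgroup.closure S = ⊤)
    (H1 H2 : Subgroup G1) (φ : H1 ≃* H2)
    (SH : Set H1) (hSHfin : SH.Finite) (hSHgen : Subgroup.closure SH = ⊤)
    (hsub : (Subtype.val '' SH) ∪ (Subtype.val '' ((fun h => φ h) '' SH)) ⊆ S)
    (T : Set (HNNExtension G1 H1 H2 φ))
    (hT : T = (HNNExtension.of '' S) ∪ {HNNExtension.t})
    (M : ℕ) (hM : 0 < M)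
    (hH : ∀ h : H1, wordLength SH h ≤ M * wordLength T (HNNExtension.of (h : G1)))
    (hK : ∀ k : H2,
      wordLength ((fun h => φ h) '' SH) k ≤ M * wordLength T (HNNExtension.of (k : G1))) :
    (∀ g : G1, wordLength S g ≤ M * wordLength T (HNNExtension.of g)) ∧
    ∃ M' : ℕ, ∀ g : G1,
      wordLength S g ≤ M' * wordLength T (HNNExtension.of g) + M' :=
  hnn_base_group_undistorted_general S hSgen H1 H2 φ SH hSHgen hsub T hT M hM hH hK
end

section
/- Let G1 and G2 be groups with finite generating sets S1 and S2, let H be a group with finite generating set S_H, and let ι1 : H → G1 and ι2 : H → G2 be injective homomorphisms with ι1(S_H) ⊆ S1 and ι2(S_H) ⊆ S2. Let G = G1 *_H G2 be the amalgamated free product (the pushout of ι1 and ι2), identify G1 and G2 with their images in G, and let T be the image of S1 ∪ S2 in G, a finite generating set of G. Suppose there is a positive integer M such that |h|_{S_H} ≤ M·|ι1(h)|_T for every h ∈ H. Then there is a constant M' such that |g|_{S1} ≤ M'·|g|_T for every g ∈ G1; in particular G1 is undistorted in G. -/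
open Monoid

/-- The normal subgroup of the coproduct `G₁ ∗ G₂` generated by the amalgamation relations
`ι₁(h) = ι₂(h)` for `h ∈ H`. -/
def amalgamKer {G1 G2 H : Type*} [Group G1] [Group G2] [Group H]
    (ι1 : H →* G1) (ι2 : H →* G2) : Subgroup (Coprod G1 G2) :=
  Subgroup.normalClosure {x | ∃ h : H, x = Coprod.inl (ι1 h) * (Coprod.inr (ι2 h))⁻¹}

instance amalgamKer_normal {G1 G2 H : Type*} [Group G1] [Group G2] [Group H]
    (ι1 : H →* G1) (ι2 : H →* G2) : (amalgamKer ι1 ι2).Normal :=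
  Subgroup.normalClosure_normal

/-- The amalgamated free product `G₁ *_H G₂`, the pushout of `ι₁ : H →* G₁` and
`ι₂ : H →* G₂`, realized as the quotient of the coproduct `G₁ ∗ G₂` by the amalgamation
relations. -/
abbrev AmalgamatedProduct {G1 G2 H : Type*} [Group G1] [Group G2] [Group H]
    (ι1 : H →* G1) (ι2 : H →* G2) : Type _ :=
  Coprod G1 G2 ⧸ amalgamKer ι1 ι2

/-- The natural map `G₁ →* G₁ *_H G₂`. -/
def AmalgamatedProduct.j1 {G1 G2 H : Type*} [Group G1] [Group G2] [Group H]
    (ι1 : H →* G1) (ι2 : H →* G2) : G1 →* AmalgamatedProduct ι1 ι2 :=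
  (QuotientGroup.mk' (amalgamKer ι1 ι2)).comp Coprod.inl

/-- The natural map `G₂ →* G₁ *_H G₂`. -/
def AmalgamatedProduct.j2 {G1 G2 H : Type*} [Group G1] [Group G2] [Group H]
    (ι1 : H →* G1) (ι2 : H →* G2) : G2 →* AmalgamatedProduct ι1 ι2 :=
  (QuotientGroup.mk' (amalgamKer ι1 ι2)).comp Coprod.inr

/-!
Write `j1 g` as a geodesic `T`-word and cut it into syllables: elements of `G1` or `G2`, each
weighted by the number `c` of `T`-letters it came from, a `G1`-syllable of weight `c` having
`S1`-length at most `K * c` (`K = max M 1`). Adjacent syllables in the same factor merge, and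
a syllable in the image of `H` may change factor, from `G2` to `G1` at exactly the cost that
`|h|_{S_H} ≤ M |h|_T` allows. By the normal form theorem for amalgamated products
(Mathlib's `PushoutI`), a product of two or more syllables that lies in `G1` always admits a
merge, so the syllables collapse to a single `G1`-syllable of weight `|j1 g|_T`.
-/

theorem List.IsChain.forall_mem_of_two_le_length {α : Type*} {P : α → Prop} {l : List α}
    (h : l.IsChain fun a b => P a ∧ P b) (hl : 2 ≤ l.length) : ∀ a ∈ l, P a := by
  induction l with
  | nil => simp at hl
  | cons a l ih =>
    obtain _ | ⟨b, l⟩ := l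
    · simp at hl
    rw [List.isChain_cons_cons] at h
    obtain _ | ⟨c, l⟩ := l
    · simp [h.1.1, h.1.2]
    exact List.forall_mem_cons.2 ⟨h.1.1, ih h.2 (by simp)⟩

section WordLength

variable {G G' : Type*} [Group G] [Group G'] {S : Set G} {g g' : G} {n n' : ℕ}

def HasWordOfLengthLE (S : Set G) (g : G) (n : ℕ) : Prop :=
  ∃ l : List G, l.length ≤ n ∧ (∀ x ∈ l, x ∈ S ∨ x⁻¹ ∈ S) ∧ l.prod = g

theorem HasWordOfLengthLE.wordLength_le (h : HasWordOfLengthLE S g n) : wordLength S g ≤ n := by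
  obtain ⟨l, hlen, hl, rfl⟩ := h
  exact le_trans (Nat.sInf_le ⟨l, rfl, hl, rfl⟩ : wordLength S l.prod ≤ l.length) hlen

theorem hasWordOfLengthLE_wordLength (hg : g ∈ Subgroup.closure S) :
    HasWordOfLengthLE S g (wordLength S g) := by
  rw [← Subgroup.mem_toSubmonoid, Subgroup.closure_toSubmonoid] at hg
  obtain ⟨l, hl, rfl⟩ := Submonoid.exists_list_of_mem_closure hg
  have hne : {n | ∃ l' : List G, l'.length = n ∧ (∀ x ∈ l', x ∈ S ∨ x⁻¹ ∈ S) ∧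
      l'.prod = l.prod}.Nonempty :=
    ⟨l.length, l, rfl, fun x hx => (hl x hx).imp id Set.mem_inv.mp, rfl⟩
  obtain ⟨l', hlen, hl', hprod⟩ := Nat.sInf_mem hne
  exact ⟨l', hlen.le, hl', hprod⟩

theorem hasWordOfLengthLE_one : HasWordOfLengthLE S 1 0 :=
  ⟨[], le_rfl, by simp, rfl⟩

theorem hasWordOfLengthLE_of_mem (hg : g ∈ S ∨ g⁻¹ ∈ S) : HasWordOfLengthLE S g 1 :=
  ⟨[g], le_rfl, by simpa using hg, List.prod_singleton⟩

theorem HasWordOfLengthLE.mono (h : HasWordOfLengthLE S g n) (hn : n ≤ n') :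
    HasWordOfLengthLE S g n' :=
  let ⟨l, hlen, hl, hprod⟩ := h
  ⟨l, hlen.trans hn, hl, hprod⟩

theorem HasWordOfLengthLE.mul (h : HasWordOfLengthLE S g n) (h' : HasWordOfLengthLE S g' n') :
    HasWordOfLengthLE S (g * g') (n + n') := by
  obtain ⟨l, hlen, hl, rfl⟩ := h
  obtain ⟨l', hlen', hl', rfl⟩ := h'
  exact ⟨l ++ l', by simp; omega, by simpa [or_imp, forall_and] using ⟨hl, hl'⟩, List.prod_append⟩

theorem HasWordOfLengthLE.map {S' : Set G'} (f : G →* G') (hf : f '' S ⊆ S')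
    (h : HasWordOfLengthLE S g n) : HasWordOfLengthLE S' (f g) n := by
  obtain ⟨l, hlen, hl, rfl⟩ := h
  refine ⟨l.map f, by simpa using hlen, ?_, (map_list_prod f l).symm⟩
  simp only [List.mem_map, forall_exists_index, and_imp, forall_apply_eq_imp_iff₂]
  intro x hx
  rw [← map_inv]
  exact (hl x hx).imp (fun hx => hf ⟨x, hx, rfl⟩) (fun hx => hf ⟨x⁻¹, hx, rfl⟩)

end WordLength

namespace Monoid.PushoutI

variable {ι : Type*} {G : ι → Type*} [∀ i, Group (G i)] {H : Type*} [Group H]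
  {φ : ∀ i, H →* G i}

theorem Reduced.length_le_one_of_mem_range (hφ : ∀ i, Function.Injective (φ i))
    {w : CoprodI.Word G} (hw : Reduced φ w) {i : ι}
    (hprod : ofCoprodI w.prod ∈ (of (φ := φ) i).range) : w.toList.length ≤ 1 := by
  obtain ⟨d⟩ := NormalWord.transversal_nonempty φ hφ
  obtain ⟨w', hw'prod, hw'fst⟩ := hw.exists_normalWord_prod_eq d
  obtain ⟨g, hg⟩ := hprod
  have hlen : w'.toList.length = w.toList.length := by simpa using congrArg List.length hw'fst
  rw [← hg] at hw'prod
  rw [← hlen]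
  by_cases hgH : g ∈ (φ i).range
  · obtain ⟨h, rfl⟩ := hgH
    have hbase : (⟨.empty, h, by simp [CoprodI.Word.empty]⟩ : NormalWord d).prod =
        of i (φ i h) := by
      simp [of_apply_eq_base, NormalWord.prod, CoprodI.Word.empty, CoprodI.Word.prod]
    simp [NormalWord.prod_injective (hw'prod.trans hbase.symm), CoprodI.Word.empty]
  · have hcons : (NormalWord.cons g NormalWord.empty (by simp [CoprodI.Word.fstIdx]) hgH :
        NormalWord d).prod = of i g := by
      simp [NormalWord.prod_cons]
    simp [NormalWord.prod_injective (hw'prod.trans hcons.symm), NormalWord.cons,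
      CoprodI.Word.cons]

end Monoid.PushoutI

namespace AmalgamatedProduct

universe u₁ u₂ u₃

variable {G1 : Type u₁} {G2 : Type u₂} {H : Type u₃} [Group G1] [Group G2] [Group H]
  {ι1 : H →* G1} {ι2 : H →* G2}

variable (ι1 ι2) in
theorem j1_apply_eq_j2_apply (h : H) : j1 ι1 ι2 (ι1 h) = j2 ι1 ι2 (ι2 h) :=
  QuotientGroup.eq_iff_div_mem.2 (Subgroup.subset_normalClosure ⟨h, rfl⟩)

/-- Mathlib's `PushoutI` amalgamates a family of groups in a single universe, so `G1` and `G2`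
are lifted to a common one; `true` indexes `G1`. -/
abbrev Factor (G1 : Type u₁) (G2 : Type u₂) (b : Bool) : Type (max u₁ u₂) :=
  cond b (ULift.{u₂} G1) (ULift.{u₁} G2)

instance : ∀ b, Group (Factor G1 G2 b)
  | true => inferInstanceAs (Group (ULift G1))
  | false => inferInstanceAs (Group (ULift G2))

variable (ι1 ι2) in
def factorHom : ∀ b, H →* Factor G1 G2 b
  | true => MulEquiv.ulift.symm.toMonoidHom.comp ι1
  | false => MulEquiv.ulift.symm.toMonoidHom.comp ι2

theorem factorHom_injective (hι1 : Function.Injective ι1) (hι2 : Function.Injective ι2) :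
    ∀ b, Function.Injective (factorHom ι1 ι2 b)
  | true => MulEquiv.ulift.symm.injective.comp hι1
  | false => MulEquiv.ulift.symm.injective.comp hι2

variable (ι1 ι2) in
def toPushoutI : AmalgamatedProduct ι1 ι2 →* PushoutI (factorHom ι1 ι2) :=
  QuotientGroup.lift (amalgamKer ι1 ι2)
    (Coprod.lift ((PushoutI.of true).comp MulEquiv.ulift.symm.toMonoidHom)
      ((PushoutI.of false).comp MulEquiv.ulift.symm.toMonoidHom)) <| by
    refine Subgroup.normalClosure_le_normal ?_
    rintro _ ⟨h, rfl⟩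
    have h1 := PushoutI.of_apply_eq_base (factorHom ι1 ι2) true h
    have h2 := PushoutI.of_apply_eq_base (factorHom ι1 ι2) false h
    simp_all [factorHom]

@[simp]
theorem toPushoutI_j1 (a : G1) :
    toPushoutI ι1 ι2 (j1 ι1 ι2 a) = PushoutI.of true (ULift.up a) :=
  rfl

@[simp]
theorem toPushoutI_j2 (b : G2) :
    toPushoutI ι1 ι2 (j2 ι1 ι2 b) = PushoutI.of false (ULift.up b) :=
  rfl

theorem j1_injective (hι1 : Function.Injective ι1) (hι2 : Function.Injective ι2) :
    Function.Injective (j1 ι1 ι2) := fun a b hab =>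
  congrArg ULift.down <| PushoutI.of_injective (factorHom_injective hι1 hι2) true <| by
    simpa using congrArg (toPushoutI ι1 ι2) hab

theorem exists_of_j2_eq_j1 (hι1 : Function.Injective ι1) (hι2 : Function.Injective ι2)
    {a : G1} {b : G2} (hab : j2 ι1 ι2 b = j1 ι1 ι2 a) : ∃ h : H, ι1 h = a ∧ ι2 h = b := by
  have hφ := factorHom_injective hι1 hι2
  have hmem : PushoutI.of true (ULift.up a) ∈
      (PushoutI.of (φ := factorHom ι1 ι2) true).range ⊓ (PushoutI.of false).range :=
    ⟨⟨_, rfl⟩, ⟨ULift.up b, by simpa using congrArg (toPushoutI ι1 ι2) hab⟩⟩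
  rw [PushoutI.inf_of_range_eq_base_range hφ Bool.noConfusion] at hmem
  obtain ⟨h, hh⟩ := hmem
  refine ⟨h, congrArg ULift.down (PushoutI.of_injective hφ true ?_),
    congrArg ULift.down (PushoutI.of_injective hφ false ?_)⟩
  · exact (PushoutI.of_apply_eq_base _ true h).trans hh
  · refine (PushoutI.of_apply_eq_base _ false h).trans (hh.trans ?_)
    simpa using congrArg (toPushoutI ι1 ι2) hab.symm

variable (ι1 ι2) in
def ofSum : G1 ⊕ G2 → AmalgamatedProduct ι1 ι2 :=
  Sum.elim (j1 ι1 ι2) (j2 ι1 ι2)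

variable (ι1 ι2) in
def InBase : G1 ⊕ G2 → Prop :=
  Sum.elim (· ∈ ι1.range) (· ∈ ι2.range)

def sumToSigma : G1 ⊕ G2 → Σ b, Factor G1 G2 b :=
  Sum.elim (fun a => ⟨true, ULift.up a⟩) (fun b => ⟨false, ULift.up b⟩)

theorem inBase_of_mem_range {x : G1 ⊕ G2}
    (hx : (sumToSigma x).2 ∈ (factorHom ι1 ι2 (sumToSigma x).1).range) : InBase ι1 ι2 x := by
  rcases x with a | b <;> obtain ⟨h, hh⟩ := hx <;> exact ⟨h, congrArg ULift.down hh⟩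

theorem toPushoutI_prod_map_ofSum (L : List (G1 ⊕ G2)) :
    toPushoutI ι1 ι2 (L.map (ofSum ι1 ι2)).prod =
      PushoutI.ofCoprodI ((L.map sumToSigma).map fun x => CoprodI.of x.2).prod := by
  induction L with
  | nil => simp
  | cons x L ih =>
    simp only [List.map_cons, List.prod_cons, map_mul, ih, PushoutI.ofCoprodI_of]
    rcases x with a | b <;> rfl

theorem length_le_one_of_prod_mem_range (hι1 : Function.Injective ι1)
    (hι2 : Function.Injective ι2) {L : List (G1 ⊕ G2)}
    (halt : L.IsChain fun x y => x.isLeft ≠ y.isLeft) (hL : ∀ x ∈ L, ¬ InBase ι1 ι2 x)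
    (hprod : (L.map (ofSum ι1 ι2)).prod ∈ (j1 ι1 ι2).range) : L.length ≤ 1 := by
  have hfst : ∀ x : G1 ⊕ G2, (sumToSigma x).1 = x.isLeft := by rintro (a | b) <;> rfl
  let w : CoprodI.Word (Factor G1 G2) :=
    { toList := L.map sumToSigma
      ne_one := by
        simp only [List.mem_map, forall_exists_index, and_imp, forall_apply_eq_imp_iff₂]
        exact fun x hx h1 => hL x hx (inBase_of_mem_range (h1 ▸ one_mem _))
      chain_ne := by simpa [List.isChain_map, hfst] using halt }
  have hw : PushoutI.Reduced (factorHom ι1 ι2) w := by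
    simp only [PushoutI.Reduced, w, List.mem_map, forall_exists_index, and_imp,
      forall_apply_eq_imp_iff₂]
    exact fun x hx hmem => hL x hx (inBase_of_mem_range hmem)
  obtain ⟨g, hg⟩ := hprod
  simpa [w] using hw.length_le_one_of_mem_range (factorHom_injective hι1 hι2) (i := true)
    ⟨ULift.up g, by rw [← toPushoutI_j1, hg, toPushoutI_prod_map_ofSum]; rfl⟩

end AmalgamatedProduct

open AmalgamatedProduct

section Syllables

variable {G1 G2 H : Type*} [Group G1] [Group G2] [Group H] {ι1 : H →* G1} {ι2 : H →* G2}
  {S1 : Set G1} {T : Set (AmalgamatedProduct ι1 ι2)} {K : ℕ}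

variable (S1 T K) in
def IsControlled : (G1 ⊕ G2) × ℕ → Prop
  | (.inl a, c) => HasWordOfLengthLE T (j1 ι1 ι2 a) c ∧ HasWordOfLengthLE S1 a (K * c)
  | (.inr b, c) => HasWordOfLengthLE T (j2 ι1 ι2 b) c

variable (S1 T K) in
def CanMerge (p q : (G1 ⊕ G2) × ℕ) : Prop :=
  ∃ r, IsControlled S1 T K r ∧ ofSum ι1 ι2 r.1 = ofSum ι1 ι2 p.1 * ofSum ι1 ι2 q.1 ∧
    r.2 = p.2 + q.2

theorem isControlled_inr_of_inl {h : H} {c : ℕ}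
    (hp : IsControlled S1 T K (.inl (ι1 h), c)) : IsControlled S1 T K (.inr (ι2 h), c) := by
  simpa only [IsControlled, j1_apply_eq_j2_apply] using hp.1

theorem isControlled_inl_of_inr
    (hH : ∀ h : H, HasWordOfLengthLE S1 (ι1 h) (K * wordLength T (j1 ι1 ι2 (ι1 h)))) {h : H} {c : ℕ}
    (hp : IsControlled S1 T K (.inr (ι2 h), c)) : IsControlled S1 T K (.inl (ι1 h), c) := by
  have hT : HasWordOfLengthLE T (j1 ι1 ι2 (ι1 h)) c := by
    simpa only [IsControlled, j1_apply_eq_j2_apply] using hp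
  exact ⟨hT, (hH h).mono (Nat.mul_le_mul_left K hT.wordLength_le)⟩

theorem canMerge_of_isLeft_eq {p q : (G1 ⊕ G2) × ℕ} (hp : IsControlled S1 T K p)
    (hq : IsControlled S1 T K q) (hpq : p.1.isLeft = q.1.isLeft) : CanMerge S1 T K p q := by
  obtain ⟨a | a, c⟩ := p <;> obtain ⟨b | b, d⟩ := q
  · refine ⟨(.inl (a * b), c + d), ⟨?_, ?_⟩, by simp [ofSum], rfl⟩
    · rw [map_mul]
      exact hp.1.mul hq.1
    · rw [mul_add]
      exact hp.2.mul hq.2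
  · simp at hpq
  · simp at hpq
  · refine ⟨(.inr (a * b), c + d), ?_, by simp [ofSum], rfl⟩
    rw [IsControlled, map_mul]
    exact hp.mul hq

theorem canMerge_of_inBase
    (hH : ∀ h : H, HasWordOfLengthLE S1 (ι1 h) (K * wordLength T (j1 ι1 ι2 (ι1 h))))
    {p q : (G1 ⊕ G2) × ℕ} (hp : IsControlled S1 T K p) (hq : IsControlled S1 T K q)
    (hbase : InBase ι1 ι2 p.1 ∨ InBase ι1 ι2 q.1) : CanMerge S1 T K p q := by
  by_cases hpq : p.1.isLeft = q.1.isLeft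
  · exact canMerge_of_isLeft_eq hp hq hpq
  obtain ⟨a | a, c⟩ := p <;> obtain ⟨b | b, d⟩ := q <;> simp only [Sum.isLeft_inl,
    Sum.isLeft_inr, not_true_eq_false] at hpq <;>
    rcases hbase with ⟨h, rfl⟩ | ⟨h, rfl⟩
  · simpa [CanMerge, ofSum, j1_apply_eq_j2_apply] using
      canMerge_of_isLeft_eq (isControlled_inr_of_inl hp) hq rfl
  · simpa [CanMerge, ofSum, j1_apply_eq_j2_apply] using
      canMerge_of_isLeft_eq hp (isControlled_inl_of_inr hH hq) rfl
  · simpa [CanMerge, ofSum, j1_apply_eq_j2_apply] using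
      canMerge_of_isLeft_eq (isControlled_inl_of_inr hH hp) hq rfl
  · simpa [CanMerge, ofSum, j1_apply_eq_j2_apply] using
      canMerge_of_isLeft_eq hp (isControlled_inr_of_inl hq) rfl

theorem exists_canMerge (hι1 : Function.Injective ι1) (hι2 : Function.Injective ι2)
    (hH : ∀ h : H, HasWordOfLengthLE S1 (ι1 h) (K * wordLength T (j1 ι1 ι2 (ι1 h))))
    {L : List ((G1 ⊕ G2) × ℕ)} (hL : ∀ p ∈ L, IsControlled S1 T K p) (hlen : 2 ≤ L.length)
    (hprod : (L.map fun p => ofSum ι1 ι2 p.1).prod ∈ (j1 ι1 ι2).range) :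
    ∃ L₁ p q L₂, L = L₁ ++ p :: q :: L₂ ∧ CanMerge S1 T K p q := by
  by_contra hno
  push Not at hno
  have hchain : L.IsChain fun p q => ¬ CanMerge S1 T K p q :=
    List.isChain_iff_forall_rel_of_append_cons_cons.2 fun p q L₁ L₂ hsplit => hno L₁ p q L₂ hsplit
  have halt : (L.map Prod.fst).IsChain fun x y => x.isLeft ≠ y.isLeft :=
    (List.isChain_map Prod.fst).2 <| hchain.imp_of_mem_imp fun p q hp hq hpq hside =>
      hpq (canMerge_of_isLeft_eq (hL p hp) (hL q hq) hside)
  have hbase : ∀ p ∈ L, ¬ InBase ι1 ι2 p.1 :=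
    (hchain.imp_of_mem_imp fun p q hp hq hpq =>
      ⟨fun hb => hpq (canMerge_of_inBase hH (hL p hp) (hL q hq) (.inl hb)),
        fun hb => hpq (canMerge_of_inBase hH (hL p hp) (hL q hq) (.inr hb))⟩
      ).forall_mem_of_two_le_length hlen
  have := length_le_one_of_prod_mem_range hι1 hι2 halt (by simpa using hbase)
    (by rwa [List.map_map])
  simp only [List.length_map] at this
  omega

theorem IsControlled.hasWordOfLengthLE_of_ofSum_eq (hι1 : Function.Injective ι1)
    (hι2 : Function.Injective ι2)
    (hH : ∀ h : H, HasWordOfLengthLE S1 (ι1 h) (K * wordLength T (j1 ι1 ι2 (ι1 h))))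
    {p : (G1 ⊕ G2) × ℕ} (hp : IsControlled S1 T K p) {g : G1} (hg : ofSum ι1 ι2 p.1 = j1 ι1 ι2 g) :
    HasWordOfLengthLE S1 g (K * p.2) := by
  obtain ⟨a | b, c⟩ := p
  · rw [← j1_injective hι1 hι2 hg]
    exact hp.2
  · obtain ⟨h, rfl, rfl⟩ := exists_of_j2_eq_j1 hι1 hι2 hg
    exact (isControlled_inl_of_inr hH hp).2

theorem hasWordOfLengthLE_of_prod_eq (hι1 : Function.Injective ι1) (hι2 : Function.Injective ι2)
    (hH : ∀ h : H, HasWordOfLengthLE S1 (ι1 h) (K * wordLength T (j1 ι1 ι2 (ι1 h))))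
    (L : List ((G1 ⊕ G2) × ℕ)) (hL : ∀ p ∈ L, IsControlled S1 T K p) {g : G1}
    (hprod : (L.map fun p => ofSum ι1 ι2 p.1).prod = j1 ι1 ι2 g) :
    HasWordOfLengthLE S1 g (K * (L.map Prod.snd).sum) := by
  obtain hlen | hlen := Nat.lt_or_ge L.length 2
  · obtain _ | ⟨p, _ | ⟨q, L⟩⟩ := L
    · rw [j1_injective hι1 hι2 (hprod.symm.trans (map_one _).symm)]
      exact hasWordOfLengthLE_one
    · simpa using (hL p List.mem_cons_self).hasWordOfLengthLE_of_ofSum_eq hι1 hι2 hH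
        (by simpa using hprod)
    · simp at hlen
  · obtain ⟨L₁, p, q, L₂, rfl, r, hr, hval, hwt⟩ :=
      exists_canMerge hι1 hι2 hH hL hlen ⟨g, hprod.symm⟩
    have hmerged := hasWordOfLengthLE_of_prod_eq hι1 hι2 hH (L₁ ++ r :: L₂)
      (by simp_all [or_imp, forall_and]) (by simpa [hval, mul_assoc] using hprod)
    simpa [hwt, add_assoc] using hmerged
termination_by L.length
decreasing_by simp_all

theorem exists_isControlled_of_mem {S2 : Set G2} (hK : 1 ≤ K)
    (hT : T = j1 ι1 ι2 '' S1 ∪ j2 ι1 ι2 '' S2) {t : AmalgamatedProduct ι1 ι2}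
    (ht : t ∈ T ∨ t⁻¹ ∈ T) : ∃ x, IsControlled S1 T K (x, 1) ∧ ofSum ι1 ι2 x = t := by
  have htT : HasWordOfLengthLE T t 1 := hasWordOfLengthLE_of_mem ht
  have hS1 {a : G1} (ha : a ∈ S1 ∨ a⁻¹ ∈ S1) : HasWordOfLengthLE S1 a (K * 1) :=
    (hasWordOfLengthLE_of_mem ha).mono (by omega)
  rw [hT] at ht
  obtain (⟨a, ha, rfl⟩ | ⟨b, hb, rfl⟩) | (⟨a, ha, hat⟩ | ⟨b, hb, hbt⟩) := ht
  · exact ⟨.inl a, ⟨htT, hS1 (.inl ha)⟩, rfl⟩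
  · exact ⟨.inr b, htT, rfl⟩
  · rw [← inv_inv t, ← hat, ← map_inv] at htT ⊢
    exact ⟨.inl a⁻¹, ⟨htT, hS1 (.inr (by rwa [inv_inv]))⟩, rfl⟩
  · rw [← inv_inv t, ← hbt, ← map_inv] at htT ⊢
    exact ⟨.inr b⁻¹, htT, rfl⟩

theorem exists_isControlled_syllables {S2 : Set G2} (hK : 1 ≤ K)
    (hT : T = j1 ι1 ι2 '' S1 ∪ j2 ι1 ι2 '' S2) :
    ∀ l : List (AmalgamatedProduct ι1 ι2), (∀ t ∈ l, t ∈ T ∨ t⁻¹ ∈ T) →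
      ∃ L : List ((G1 ⊕ G2) × ℕ), (∀ p ∈ L, IsControlled S1 T K p) ∧
        (L.map fun p => ofSum ι1 ι2 p.1).prod = l.prod ∧ (L.map Prod.snd).sum = l.length
  | [], _ => ⟨[], by simp, by simp, by simp⟩
  | t :: l, hl => by
    obtain ⟨x, hx, rfl⟩ := exists_isControlled_of_mem hK hT (hl t List.mem_cons_self)
    obtain ⟨L, hL, hprod, hsum⟩ :=
      exists_isControlled_syllables hK hT l fun s hs => hl s (List.mem_cons_of_mem _ hs)
    exact ⟨(x, 1) :: L, List.forall_mem_cons.2 ⟨hx, hL⟩, by simp [hprod], by simp [hsum, add_comm]⟩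

theorem wordLength_le_mul_wordLength_j1 {SH : Set H} {S2 : Set G2} (hι1 : Function.Injective ι1)
    (hι2 : Function.Injective ι2) (hS1 : Subgroup.closure S1 = ⊤) (hSH : Subgroup.closure SH = ⊤)
    (hsub1 : ι1 '' SH ⊆ S1) (hT : T = j1 ι1 ι2 '' S1 ∪ j2 ι1 ι2 '' S2) (hK : 1 ≤ K)
    (hH : ∀ h : H, wordLength SH h ≤ K * wordLength T (j1 ι1 ι2 (ι1 h))) (g : G1) :
    wordLength S1 g ≤ K * wordLength T (j1 ι1 ι2 g) := by
  have hg : j1 ι1 ι2 g ∈ Subgroup.closure T := by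
    refine hT ▸ Subgroup.closure_mono Set.subset_union_left ?_
    rw [← MonoidHom.map_closure, hS1]
    exact ⟨g, trivial, rfl⟩
  obtain ⟨l, hlen, hl, hprod⟩ := hasWordOfLengthLE_wordLength hg
  have hι1H (h : H) : HasWordOfLengthLE S1 (ι1 h) (K * wordLength T (j1 ι1 ι2 (ι1 h))) :=
    ((hasWordOfLengthLE_wordLength (hSH ▸ Subgroup.mem_top h)).map ι1 hsub1).mono (hH h)
  obtain ⟨L, hL, hLprod, hLsum⟩ := exists_isControlled_syllables hK hT l hl
  refine (hasWordOfLengthLE_of_prod_eq hι1 hι2 hι1H L hL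
    (hLprod.trans hprod)).wordLength_le.trans ?_
  rw [hLsum]
  exact Nat.mul_le_mul_left K hlen

end Syllables

theorem amalgam_factor_undistorted_general
    {G1 G2 H : Type*} [Group G1] [Group G2] [Group H]
    (S1 : Set G1) (hS1gen : Subgroup.closure S1 = ⊤)
    (S2 : Set G2)
    (SH : Set H) (hSHgen : Subgroup.closure SH = ⊤)
    (ι1 : H →* G1) (ι2 : H →* G2)
    (hι1 : Function.Injective ι1) (hι2 : Function.Injective ι2)
    (hsub1 : ι1 '' SH ⊆ S1)
    (T : Set (AmalgamatedProduct ι1 ι2))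
    (hT : T = AmalgamatedProduct.j1 ι1 ι2 '' S1 ∪ AmalgamatedProduct.j2 ι1 ι2 '' S2)
    (M : ℕ)
    (hH : ∀ h : H, wordLength SH h ≤ M * wordLength T (AmalgamatedProduct.j1 ι1 ι2 (ι1 h))) :
    (∃ M' : ℕ, ∀ g : G1,
        wordLength S1 g ≤ M' * wordLength T (AmalgamatedProduct.j1 ι1 ι2 g)) ∧
    ∃ M'' : ℕ, ∀ g : G1,
      wordLength S1 g ≤ M'' * wordLength T (AmalgamatedProduct.j1 ι1 ι2 g) + M'' := by
  have hbound := wordLength_le_mul_wordLength_j1 hι1 hι2 hS1gen hSHgen hsub1 hT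
    (le_max_right M 1) fun h => (hH h).trans (Nat.mul_le_mul_right _ (le_max_left M 1))
  exact ⟨⟨max M 1, hbound⟩, ⟨max M 1, fun g => (hbound g).trans (Nat.le_add_right _ _)⟩⟩

/-- Let `G₁`, `G₂` have finite generating sets `S₁`, `S₂`, let `H` have finite generating set
`S_H`, and let `ι₁ : H → G₁`, `ι₂ : H → G₂` be injective homomorphisms with `ι₁(S_H) ⊆ S₁` and
`ι₂(S_H) ⊆ S₂`. Let `G = G₁ *_H G₂` with finite generating set `T`, the image of `S₁ ∪ S₂`.
If there is a positive integer `M` with `|h|_{S_H} ≤ M |ι₁(h)|_T` for every `h ∈ H`, then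
there is `M'` such that `|g|_{S₁} ≤ M' |g|_T` for every `g ∈ G₁`; in particular `G₁` is
undistorted in `G`. -/
theorem amalgam_factor_undistorted
    {G1 G2 H : Type*} [Group G1] [Group G2] [Group H]
    (S1 : Set G1) (hS1fin : S1.Finite) (hS1gen : Subgroup.closure S1 = ⊤)
    (S2 : Set G2) (hS2fin : S2.Finite) (hS2gen : Subgroup.closure S2 = ⊤)
    (SH : Set H) (hSHfin : SH.Finite) (hSHgen : Subgroup.closure SH = ⊤)
    (ι1 : H →* G1) (ι2 : H →* G2)
    (hι1 : Function.Injective ι1) (hι2 : Function.Injective ι2)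
    (hsub1 : ι1 '' SH ⊆ S1) (hsub2 : ι2 '' SH ⊆ S2)
    (T : Set (AmalgamatedProduct ι1 ι2))
    (hT : T = AmalgamatedProduct.j1 ι1 ι2 '' S1 ∪ AmalgamatedProduct.j2 ι1 ι2 '' S2)
    (M : ℕ) (hM : 0 < M)
    (hH : ∀ h : H, wordLength SH h ≤ M * wordLength T (AmalgamatedProduct.j1 ι1 ι2 (ι1 h))) :
    (∃ M' : ℕ, ∀ g : G1,
        wordLength S1 g ≤ M' * wordLength T (AmalgamatedProduct.j1 ι1 ι2 g)) ∧
    ∃ M'' : ℕ, ∀ g : G1,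
      wordLength S1 g ≤ M'' * wordLength T (AmalgamatedProduct.j1 ι1 ι2 g) + M'' :=
  amalgam_factor_undistorted_general S1 hS1gen S2 SH hSHgen ι1 ι2 hι1 hι2 hsub1 T hT M hH
end
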